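/- arXiv:2502.19575 — 11 statements merged into one kernel-verified Lean document; each statement's English description precedes it below -/
import Mathlib

section
/- Let u ∈ 𝒞 be a real number of continued fraction type, and let a, b, c, d ∈ ℚ with ad - bc ≠ 0 and cu + d ≠ 0. Then (au + b)/(cu + d) ∈ 𝒞. -/
/-- Numerators of the generalized continued fraction with partial
quotients `a` and partial numerators `b`:
`p₀ = a 0`, `p₁ = a 1 * a 0 + b 0`, `pₙ = a n * pₙ₋₁ + b (n-1) * pₙ₋₂`. -/
def cfP (a b : ℕ → ℚ) : ℕ → ℚ
  | 0 => a 0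
  | 1 => a 1 * a 0 + b 0
  | n + 2 => a (n + 2) * cfP a b (n + 1) + b (n + 1) * cfP a b n

/-- Denominators of the generalized continued fraction:
`q₀ = 1`, `q₁ = a 1`, `qₙ = a n * qₙ₋₁ + b (n-1) * qₙ₋₂`. -/
def cfQ (a b : ℕ → ℚ) : ℕ → ℚ
  | 0 => 1
  | 1 => a 1
  | n + 2 => a (n + 2) * cfQ a b (n + 1) + b (n + 1) * cfQ a b n

/-- The generalized continued fraction `a(0) + b(0)/(a(1) + b(1)/(a(2) + ⋯))`
converges to the real number `u`. -/
def CFConvergesTo (a b : ℕ → ℚ) (u : ℝ) : Prop :=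
  (∀ n, b n ≠ 0) ∧ (∃ N, ∀ n ≥ N, cfQ a b n ≠ 0) ∧
  Filter.Tendsto (fun n : ℕ => ((cfP a b n : ℝ) / (cfQ a b n : ℝ)))
    Filter.atTop (nhds u)

/-- The continued fraction has coefficients given by polynomials for all
sufficiently large indices. -/
def CFPolyType (a b : ℕ → ℚ) : Prop :=
  ∃ (A B : Polynomial ℚ) (N : ℕ), ∀ n ≥ N,
    a n = A.eval (n : ℚ) ∧ b n = B.eval (n : ℚ)

/-- A real number is of continued fraction type (belongs to `𝒞`) if some
generalized continued fraction of polynomial type converges to it. -/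
def CFType (u : ℝ) : Prop :=
  ∃ a b : ℕ → ℚ, CFPolyType a b ∧ CFConvergesTo a b u

/-!
Every Möbius map with `c ≠ 0` factors as `u ↦ a/c + ((bc - ad)/c) / (cu + d)`, so it suffices that
`𝒞` is stable under `u ↦ r u + s` and `u ↦ s + r / u` for rational `r ≠ 0`. The first replaces
`a 0, b 0` by `r a 0 + s, r b 0`, which turns the convergents `pₙ / qₙ` into `(r pₙ + s qₙ) / qₙ`.
The second prepends the partial quotient `s` and partial numerator `r`, which turns them into
`(s pₙ + r qₙ) / pₙ`. Both keep the tails of the coefficient sequences (up to an index shift in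
the second case), hence the polynomial type.
-/

open Filter Function Polynomial

theorem cfPolyType_iff_succ {a b : ℕ → ℚ} :
    CFPolyType a b ↔ CFPolyType (fun n => a (n + 1)) (fun n => b (n + 1)) := by
  constructor
  · rintro ⟨A, B, N, hAB⟩
    refine ⟨A.comp (X + 1), B.comp (X + 1), N, fun n hn => ?_⟩
    simpa using hAB (n + 1) (by omega)
  · rintro ⟨A, B, N, hAB⟩
    refine ⟨A.comp (X - 1), B.comp (X - 1), N + 1, fun n hn => ?_⟩
    obtain ⟨m, rfl⟩ : ∃ m, n = m + 1 := ⟨n - 1, by omega⟩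
    simpa using hAB m (by omega)

theorem cfQ_update_zero (a b : ℕ → ℚ) (x y : ℚ) :
    cfQ (update a 0 x) (update b 0 y) = cfQ a b := by
  funext n
  induction n using Nat.twoStepInduction with
  | zero => rfl
  | one => simp [cfQ]
  | more n ih₀ ih₁ => simp [cfQ, ih₀, ih₁]

theorem cfP_update_zero (a b : ℕ → ℚ) (r s : ℚ) (n : ℕ) :
    cfP (update a 0 (r * a 0 + s)) (update b 0 (r * b 0)) n =
      r * cfP a b n + s * cfQ a b n := by
  induction n using Nat.twoStepInduction with
  | zero => simp [cfP, cfQ]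
  | one => simp only [cfP, cfQ, update_self, update_of_ne one_ne_zero]; ring
  | more n ih₀ ih₁ =>
    simp only [cfP, cfQ, ih₀, ih₁, update_of_ne (Nat.succ_ne_zero _)]
    ring

def seqCons (x : ℚ) (a : ℕ → ℚ) : ℕ → ℚ
  | 0 => x
  | n + 1 => a n

theorem cfQ_seqCons_succ (a b : ℕ → ℚ) (x y : ℚ) (n : ℕ) :
    cfQ (seqCons x a) (seqCons y b) (n + 1) = cfP a b n := by
  induction n using Nat.twoStepInduction with
  | zero => rfl
  | one => simp [cfP, cfQ, seqCons]
  | more n ih₀ ih₁ =>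
    rw [cfQ, ih₀, ih₁]
    rfl

theorem cfP_seqCons_succ (a b : ℕ → ℚ) (x y : ℚ) (n : ℕ) :
    cfP (seqCons x a) (seqCons y b) (n + 1) = x * cfP a b n + y * cfQ a b n := by
  induction n using Nat.twoStepInduction with
  | zero => simp only [cfP, cfQ, seqCons]; ring
  | one => simp only [cfP, cfQ, seqCons]; ring
  | more n ih₀ ih₁ =>
    rw [cfP, ih₀, ih₁, cfP, cfQ]
    simp only [seqCons]
    ring

theorem CFType.mul_add {u : ℝ} (hu : CFType u) {r : ℚ} (hr : r ≠ 0) (s : ℚ) :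
    CFType (r * u + s) := by
  obtain ⟨a, b, hpoly, hb, ⟨N, hq⟩, hlim⟩ := hu
  refine ⟨update a 0 (r * a 0 + s), update b 0 (r * b 0), ?_, ?_, ⟨N, ?_⟩, ?_⟩
  · rw [cfPolyType_iff_succ] at hpoly ⊢
    simpa using hpoly
  · rintro (_ | n)
    · simpa using mul_ne_zero hr (hb 0)
    · simpa using hb (n + 1)
  · simpa only [cfQ_update_zero] using hq
  · simp only [cfP_update_zero, cfQ_update_zero]
    refine ((hlim.const_mul (r : ℝ)).add_const (s : ℝ)).congr' ?_
    filter_upwards [eventually_atTop.2 ⟨N, hq⟩] with n hn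
    have hn' : (cfQ a b n : ℝ) ≠ 0 := by exact_mod_cast hn
    push_cast
    field_simp

theorem CFType.add_div {u : ℝ} (hu : CFType u) (hu0 : u ≠ 0) (s : ℚ) {r : ℚ} (hr : r ≠ 0) :
    CFType (s + r / u) := by
  obtain ⟨a, b, hpoly, hb, -, hlim⟩ := hu
  have hp : ∀ᶠ n in atTop, cfP a b n ≠ 0 :=
    (hlim.eventually_ne hu0).mono fun n hn hp => hn (by simp [hp])
  obtain ⟨N, hN⟩ := eventually_atTop.1 hp
  refine ⟨seqCons s a, seqCons r b, cfPolyType_iff_succ.2 hpoly, ?_, ⟨N + 1, ?_⟩, ?_⟩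
  · rintro (_ | n)
    exacts [hr, hb n]
  · intro n hn
    obtain ⟨m, rfl⟩ : ∃ m, n = m + 1 := ⟨n - 1, by omega⟩
    rw [cfQ_seqCons_succ]
    exact hN m (by omega)
  · rw [← tendsto_add_atTop_iff_nat 1]
    simp only [cfP_seqCons_succ, cfQ_seqCons_succ]
    refine ((tendsto_const_nhds.div hlim hu0).const_add (s : ℝ)).congr' ?_
    filter_upwards [hp] with n hn
    have hn' : (cfP a b n : ℝ) ≠ 0 := by exact_mod_cast hn
    push_cast
    rw [Pi.div_apply, div_div_eq_mul_div]
    field_simp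

/-- `𝒞` is stable under the action of `GL₂(ℚ)` by Möbius transformations. -/
theorem CFType_moebius (u : ℝ) (hu : CFType u) (a b c d : ℚ)
    (hdet : a * d - b * c ≠ 0) (hden : (c : ℝ) * u + (d : ℝ) ≠ 0) :
    CFType (((a : ℝ) * u + (b : ℝ)) / ((c : ℝ) * u + (d : ℝ))) := by
  rcases eq_or_ne c 0 with rfl | hc
  · have ha : a ≠ 0 := by rintro rfl; simp at hdet
    have hd : d ≠ 0 := by rintro rfl; simp at hdet
    convert hu.mul_add (div_ne_zero ha hd) (b / d) using 1
    rw [Rat.cast_zero, zero_mul, zero_add]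
    push_cast
    field_simp
  · have hr : (b * c - a * d) / c ≠ 0 := div_ne_zero (by contrapose! hdet; linarith) hc
    convert (hu.mul_add hc d).add_div hden (a / c) hr using 1
    have hc' : (c : ℝ) ≠ 0 := by exact_mod_cast hc
    push_cast
    rw [div_add_div _ _ hc' hden, div_eq_div_iff hden (mul_ne_zero hc' hden)]
    field_simp
    ring
end

section
/- Let u be a real number that is algebraic of degree 3 over ℚ, and let v be an element of the field ℚ(u) with v ∉ ℚ. Then there exist a, b, c, d ∈ ℚ with ad - bc ≠ 0 and cu + d ≠ 0 such that v = (au + b)/(cu + d). -/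
open IntermediateField Module

/-!
In a field extension `K / F` of degree at most 3, the four elements `1, u, v, v u` are linearly
dependent, so `v (c u + d) = a u + b` for some `a, b, c, d ∈ F`, not all zero. If `u ∉ F`, then
`1, u` are independent, which forces `c u + d ≠ 0`; and if `a d - b c = 0`, the rows `(a, b)` and
`(c, d)` are proportional, so `v ∈ F`. Apply this to `K = ℚ(u)`.
-/

section Moebius

variable {F K : Type*} [Field F] [Field K] [Algebra F K]

theorem exists_nontrivial_moebius_relation [FiniteDimensional F K] (hK : finrank F K ≤ 3)
    (u v : K) : ∃ a b c d : F, ¬(a = 0 ∧ b = 0 ∧ c = 0 ∧ d = 0) ∧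
      v * (algebraMap F K c * u + algebraMap F K d) = algebraMap F K a * u + algebraMap F K b := by
  have hdep : ¬LinearIndependent F ![1, u, v, v * u] := fun hli ↦ by
    simpa using hli.fintype_card_le_finrank.trans hK
  obtain ⟨g, hg, i, hi⟩ := Fintype.not_linearIndependent_iff.mp hdep
  refine ⟨-g 1, -g 0, g 3, g 2, fun h ↦ ?_, ?_⟩
  · obtain ⟨h1, h0, h3, h2⟩ := h
    fin_cases i <;> simp_all
  · simp only [Fin.sum_univ_four, Matrix.cons_val, Algebra.smul_def] at hg
    simp only [map_neg]
    linear_combination hg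

theorem eq_zero_of_algebraMap_mul_add_eq_zero {u : K} (hu : u ∉ (algebraMap F K).range) {c d : F}
    (h : algebraMap F K c * u + algebraMap F K d = 0) : c = 0 ∧ d = 0 := by
  obtain rfl : c = 0 := by
    by_contra hc
    refine hu ⟨-d / c, ?_⟩
    rw [map_div₀, map_neg, neg_div, neg_eq_iff_eq_neg, div_eq_iff (by simpa using hc)]
    linear_combination h
  simpa using h

theorem mem_range_of_mul_eq_of_det_eq_zero {u v : K} {a b c d : F}
    (hden : algebraMap F K c * u + algebraMap F K d ≠ 0)
    (hv : v * (algebraMap F K c * u + algebraMap F K d) = algebraMap F K a * u + algebraMap F K b)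
    (hdet : a * d - b * c = 0) : v ∈ (algebraMap F K).range := by
  have hdet' : algebraMap F K a * algebraMap F K d = algebraMap F K b * algebraMap F K c := by
    simpa [sub_eq_zero] using congrArg (algebraMap F K) hdet
  by_cases hc : c = 0
  · subst hc
    have hd : d ≠ 0 := by rintro rfl; simp at hden
    have ha : a = 0 := by simpa [hd] using hdet
    refine ⟨b / d, ?_⟩
    rw [map_div₀, div_eq_iff (by simpa using hd)]
    simpa [ha] using hv.symm
  · refine ⟨a / c, ?_⟩
    rw [map_div₀, div_eq_iff (by simpa using hc)]
    apply mul_right_cancel₀ hden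
    linear_combination -(algebraMap F K c) * hv + hdet'

theorem exists_moebius_eq_of_finrank_le_three [FiniteDimensional F K] (hK : finrank F K ≤ 3)
    {u v : K} (hu : u ∉ (algebraMap F K).range) (hv : v ∉ (algebraMap F K).range) :
    ∃ a b c d : F, a * d - b * c ≠ 0 ∧ algebraMap F K c * u + algebraMap F K d ≠ 0 ∧
      v = (algebraMap F K a * u + algebraMap F K b) / (algebraMap F K c * u + algebraMap F K d) := by
  obtain ⟨a, b, c, d, hnontriv, hrel⟩ := exists_nontrivial_moebius_relation hK u v
  have hden : algebraMap F K c * u + algebraMap F K d ≠ 0 := fun h0 ↦ by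
    obtain ⟨rfl, rfl⟩ := eq_zero_of_algebraMap_mul_add_eq_zero hu h0
    obtain ⟨rfl, rfl⟩ := eq_zero_of_algebraMap_mul_add_eq_zero hu (by simpa using hrel.symm)
    exact hnontriv ⟨rfl, rfl, rfl, rfl⟩
  refine ⟨a, b, c, d, fun hdet ↦ hv ?_, hden, (eq_div_iff hden).mpr hrel⟩
  exact mem_range_of_mul_eq_of_det_eq_zero hden hrel hdet

end Moebius

/-- Any non-rational element of the cubic field ℚ(u) is the image of `u`
under a Möbius transformation in GL₂(ℚ). -/
theorem mem_cubic_field_eq_moebius (u : ℝ) (hu : (minpoly ℚ u).natDegree = 3)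
    (v : ℝ) (hv : v ∈ IntermediateField.adjoin ℚ ({u} : Set ℝ))
    (hvQ : v ∉ Set.range ((↑) : ℚ → ℝ)) :
    ∃ a b c d : ℚ, a * d - b * c ≠ 0 ∧ (c : ℝ) * u + (d : ℝ) ≠ 0 ∧
      v = ((a : ℝ) * u + (b : ℝ)) / ((c : ℝ) * u + (d : ℝ)) := by
  have hint : IsIntegral ℚ u := by
    by_contra h
    simp [minpoly.eq_zero h] at hu
  have : FiniteDimensional ℚ ℚ⟮u⟯ := adjoin.finiteDimensional hint
  have hgen : AdjoinSimple.gen ℚ u ∉ (algebraMap ℚ ℚ⟮u⟯).range := by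
    rintro ⟨t, ht⟩
    have hrat : u ∈ (algebraMap ℚ ℝ).range := ⟨t, congrArg Subtype.val ht⟩
    rw [← minpoly.natDegree_eq_one_iff, hu] at hrat
    norm_num at hrat
  have hv' : (⟨v, hv⟩ : ℚ⟮u⟯) ∉ (algebraMap ℚ ℚ⟮u⟯).range := by
    rintro ⟨t, ht⟩
    exact hvQ ⟨t, congrArg Subtype.val ht⟩
  obtain ⟨a, b, c, d, hdet, hden, heq⟩ :=
    exists_moebius_eq_of_finrank_le_three (adjoin.finrank hint ▸ hu.le) hgen hv'
  refine ⟨a, b, c, d, hdet, ?_, ?_⟩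
  · exact fun h0 ↦ hden (Subtype.ext (by simpa using h0))
  · simpa using congrArg Subtype.val heq
end

section
/- Let c be a real number with c > 27/4. Then the polynomial x³ - cx + c has three distinct real roots β₁ < β₂ < β₃, and these satisfy β₁ < -3, 1 < β₂ < 3/2, and β₃ > 3/2. -/
/-- For `c > 27/4`, the cubic `x³ - cx + c` has three distinct real roots
`β₁ < β₂ < β₃` with `β₁ < -3`, `1 < β₂ < 3/2` and `β₃ > 3/2`. -/
theorem roots_of_cubic_location (c : ℝ) (hc : c > 27 / 4) :
    ∃ β₁ β₂ β₃ : ℝ, β₁ < β₂ ∧ β₂ < β₃ ∧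
      β₁ ^ 3 - c * β₁ + c = 0 ∧ β₂ ^ 3 - c * β₂ + c = 0 ∧
      β₃ ^ 3 - c * β₃ + c = 0 ∧
      (∀ x : ℝ, x ^ 3 - c * x + c = 0 → x = β₁ ∨ x = β₂ ∨ x = β₃) ∧
      β₁ < -3 ∧ 1 < β₂ ∧ β₂ < 3 / 2 ∧ β₃ > 3 / 2 := by
  set f : ℝ → ℝ := fun x => x ^ 3 - c * x + c with hf
  have hfc : Continuous f := by fun_prop
  -- root β₁ in [-(c+3), -3]
  have h1 : ∃ x ∈ Set.Icc (-(c+3)) (-3 : ℝ), f x = 0 := by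
    have hle : (-(c+3) : ℝ) ≤ -3 := by linarith
    have := intermediate_value_Icc hle hfc.continuousOn
    have h0 : (0 : ℝ) ∈ Set.Icc (f (-(c+3))) (f (-3)) := by
      constructor <;> simp only [hf] <;> nlinarith [sq_nonneg c, sq_nonneg (c+3)]
    obtain ⟨x, hx, hx0⟩ := this h0
    exact ⟨x, hx, hx0⟩
  -- root β₂ in [1, 3/2]
  have h2 : ∃ x ∈ Set.Icc (1 : ℝ) (3/2), f x = 0 := by
    have hle : (1 : ℝ) ≤ 3/2 := by norm_num
    have := intermediate_value_Icc' hle hfc.continuousOn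
    have h0 : (0 : ℝ) ∈ Set.Icc (f (3/2)) (f 1) := by
      constructor <;> simp only [hf] <;> nlinarith
    obtain ⟨x, hx, hx0⟩ := this h0
    exact ⟨x, hx, hx0⟩
  -- root β₃ in [3/2, c+3]
  have h3 : ∃ x ∈ Set.Icc (3/2 : ℝ) (c+3), f x = 0 := by
    have hle : (3/2 : ℝ) ≤ c+3 := by linarith
    have := intermediate_value_Icc hle hfc.continuousOn
    have h0 : (0 : ℝ) ∈ Set.Icc (f (3/2)) (f (c+3)) := by
      constructor <;> simp only [hf] <;> nlinarith [sq_nonneg c]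
    obtain ⟨x, hx, hx0⟩ := this h0
    exact ⟨x, hx, hx0⟩
  obtain ⟨β₁, ⟨_, hβ₁le⟩, hr1⟩ := h1
  obtain ⟨β₂, ⟨hβ₂ge, hβ₂le⟩, hr2⟩ := h2
  obtain ⟨β₃, ⟨hβ₃ge, _⟩, hr3⟩ := h3
  have hfm3 : f (-3) ≠ 0 := by simp only [hf]; nlinarith
  have hf1 : f 1 ≠ 0 := by simp only [hf]; norm_num
  have hf32 : f (3/2) ≠ 0 := by simp only [hf]; nlinarith
  have hβ₁lt : β₁ < -3 := lt_of_le_of_ne hβ₁le (by rintro rfl; exact hfm3 hr1)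
  have hβ₂gt : 1 < β₂ := lt_of_le_of_ne hβ₂ge (by rintro rfl; exact hf1 hr2)
  have hβ₂lt : β₂ < 3/2 := lt_of_le_of_ne hβ₂le (by rintro rfl; exact hf32 hr2)
  have hβ₃gt : 3/2 < β₃ := lt_of_le_of_ne hβ₃ge (by rintro rfl; exact hf32 hr3)
  simp only [hf] at hr1 hr2 hr3
  refine ⟨β₁, β₂, β₃, by linarith, by linarith, hr1, hr2, hr3, ?_, hβ₁lt, hβ₂gt, hβ₂lt, hβ₃gt⟩
  intro x hx
  by_cases hx1 : x = β₁
  · exact Or.inl hx1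
  by_cases hx2 : x = β₂
  · exact Or.inr (Or.inl hx2)
  right; right
  have hne1 : x - β₁ ≠ 0 := sub_ne_zero.mpr hx1
  have hne2 : x - β₂ ≠ 0 := sub_ne_zero.mpr hx2
  have hne12 : β₃ - β₁ ≠ 0 := sub_ne_zero.mpr (by intro h; linarith [h ▸ hβ₁lt])
  have hne22 : β₃ - β₂ ≠ 0 := sub_ne_zero.mpr (by intro h; linarith [h ▸ hβ₂lt])
  -- from pairs of roots: sum relations
  have e1 : x ^ 2 + x * β₁ + β₁ ^ 2 - c = 0 := by
    have h : (x - β₁) * (x ^ 2 + x * β₁ + β₁ ^ 2 - c) = 0 := by linear_combination hx - hr1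
    rcases mul_eq_zero.mp h with h | h
    · exact absurd h hne1
    · exact h
  have e2 : x ^ 2 + x * β₂ + β₂ ^ 2 - c = 0 := by
    have h : (x - β₂) * (x ^ 2 + x * β₂ + β₂ ^ 2 - c) = 0 := by linear_combination hx - hr2
    rcases mul_eq_zero.mp h with h | h
    · exact absurd h hne2
    · exact h
  have e3 : β₃ ^ 2 + β₃ * β₁ + β₁ ^ 2 - c = 0 := by
    have h : (β₃ - β₁) * (β₃ ^ 2 + β₃ * β₁ + β₁ ^ 2 - c) = 0 := by linear_combination hr3 - hr1
    rcases mul_eq_zero.mp h with h | h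
    · exact absurd h hne12
    · exact h
  have e4 : β₃ ^ 2 + β₃ * β₂ + β₂ ^ 2 - c = 0 := by
    have h : (β₃ - β₂) * (β₃ ^ 2 + β₃ * β₂ + β₂ ^ 2 - c) = 0 := by linear_combination hr3 - hr2
    rcases mul_eq_zero.mp h with h | h
    · exact absurd h hne22
    · exact h
  have hb12 : β₁ ≠ β₂ := by intro h; linarith [h ▸ hβ₁lt]
  have hne3 : β₁ - β₂ ≠ 0 := sub_ne_zero.mpr hb12
  -- e1 - e2 : (β₁ - β₂)(x + β₁ + β₂) = 0, e3 - e4 : (β₁ - β₂)(β₃ + β₁ + β₂) = 0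
  have hx3 : x = -(β₁ + β₂) := by
    have h : (β₁ - β₂) * (x + β₁ + β₂) = 0 := by linear_combination e1 - e2
    rcases mul_eq_zero.mp h with h | h
    · exact absurd h hne3
    · linarith
  have hb3 : β₃ = -(β₁ + β₂) := by
    have h : (β₁ - β₂) * (β₃ + β₁ + β₂) = 0 := by linear_combination e3 - e4
    rcases mul_eq_zero.mp h with h | h
    · exact absurd h hne3
    · linarith
  rw [hx3, hb3]
end

section
/- Let c be a real number with |c| > 27/4. Then the series S(c) = Σ_{n≥0} (1/(2n+1))·C(3n, n)·c^{-n} converges, and its sum β = S(c) satisfies β³ - cβ + c = 0. -/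
/-!
The series is the generalized binomial series `ℬ₃(1/c)`. Its coefficients `C(3n, n)/(2n+1)` are
the Raney numbers `R_{3,1}(n)`, where `R_{p,r}(n) = r/(pn+r) · C(pn+r, n)`. Pascal's rule gives
`R_{p,r+1}(n+1) = R_{p,r}(n+1) + R_{p,r+p}(n)`, from which the convolution identity
`∑_{i+j=n} R_{p,1}(i) R_{p,r}(j) = R_{p,r+1}(n)` follows by induction. Hence, inside the disc
of absolute convergence, `ℬ_p(y)^r = ∑ R_{p,r}(n) yⁿ`; since `R_{p,p}(n) = R_{p,1}(n+1)` this
gives `ℬ_p(y) = 1 + y ℬ_p(y)^p`. For `p = 3` and `y = 1/c` this is `β = 1 + β³/c`. Absolute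
convergence for `|c| > 27/4` follows from `C(3n, n) 2^{2n} ≤ 3^{3n}`, a single term of
`(1 + 2)^{3n}`.
-/

open Finset

lemma Nat.choose_mul_pow_le_add_one_pow (m k a : ℕ) :
    m.choose k * a ^ (m - k) ≤ (a + 1) ^ m := by
  rcases lt_or_ge m k with hmk | hkm
  · simp [Nat.choose_eq_zero_of_lt hmk]
  calc m.choose k * a ^ (m - k) = 1 ^ k * a ^ (m - k) * m.choose k := by ring
    _ ≤ ∑ i ∈ range (m + 1), 1 ^ i * a ^ (m - i) * m.choose i :=
      single_le_sum (f := fun i => 1 ^ i * a ^ (m - i) * m.choose i) (fun _ _ => Nat.zero_le _)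
        (mem_range.2 (Nat.lt_succ_of_le hkm))
    _ = (a + 1) ^ m := by rw [add_comm a 1, add_pow]; simp only [Nat.cast_id]

section CauchyProduct

variable {R : Type*} [NormedCommRing R] {a b : ℕ → R} {y : R}

lemma sum_antidiagonal_mul_mul_pow (a b : ℕ → R) (y : R) (n : ℕ) :
    (∑ ij ∈ antidiagonal n, a ij.1 * b ij.2) * y ^ n =
      ∑ ij ∈ antidiagonal n, a ij.1 * y ^ ij.1 * (b ij.2 * y ^ ij.2) := by
  rw [sum_mul]
  refine sum_congr rfl fun ij hij => ?_
  rw [← mem_antidiagonal.1 hij, pow_add]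
  ring

lemma summable_norm_sum_antidiagonal_mul_pow (ha : Summable fun n => ‖a n * y ^ n‖)
    (hb : Summable fun n => ‖b n * y ^ n‖) :
    Summable fun n => ‖(∑ ij ∈ antidiagonal n, a ij.1 * b ij.2) * y ^ n‖ := by
  simpa only [sum_antidiagonal_mul_mul_pow] using
    summable_norm_sum_mul_antidiagonal_of_summable_norm ha hb

lemma tsum_mul_pow_mul_tsum_mul_pow [CompleteSpace R] (ha : Summable fun n => ‖a n * y ^ n‖)
    (hb : Summable fun n => ‖b n * y ^ n‖) :
    (∑' n, a n * y ^ n) * (∑' n, b n * y ^ n) =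
      ∑' n, (∑ ij ∈ antidiagonal n, a ij.1 * b ij.2) * y ^ n := by
  simpa only [sum_antidiagonal_mul_mul_pow] using
    tsum_mul_tsum_eq_tsum_sum_antidiagonal_of_summable_norm ha hb

end CauchyProduct

/-- The Raney number `R_{p,r}(n)`. Since `raney p 0 0 = 0` (the conventional value is `1`), most
statements are about `raney p (r + 1)`. -/
noncomputable def raney (p r n : ℕ) : ℝ := r / (p * n + r) * (p * n + r).choose n

noncomputable def raneySeries (p r : ℕ) (y : ℝ) : ℝ := ∑' n, raney p r n * y ^ n

section Raney

variable {p : ℕ}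

@[simp] lemma raney_zero_left (p n : ℕ) : raney p 0 n = 0 := by simp [raney]

lemma raney_zero_right {r : ℕ} (hr : r ≠ 0) : raney p r 0 = 1 := by simp [raney, hr]

lemma raney_nonneg (p r n : ℕ) : 0 ≤ raney p r n := by unfold raney; positivity

lemma raney_succ_succ (hp : 0 < p) (r n : ℕ) :
    raney p (r + 1) (n + 1) = raney p r (n + 1) + raney p (r + p) n := by
  set N := p * n + p + r with hN
  have hNn : n ≤ N := by nlinarith
  have h1 : ((N + 1).choose (n + 1) : ℝ) * (n + 1) = (N + 1) * N.choose n := by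
    exact_mod_cast (Nat.add_one_mul_choose_eq N n).symm
  have h2 : (N.choose (n + 1) : ℝ) * (n + 1) = N.choose n * (N - n) := by
    rw [← Nat.cast_sub hNn]; exact_mod_cast Nat.choose_succ_right_eq N n
  have hNr : (N : ℝ) = p * n + p + r := by rw [hN]; push_cast; ring
  simp only [raney, show p * (n + 1) + (r + 1) = N + 1 by ring, show p * (n + 1) + r = N by ring,
    show p * n + (r + p) = N by ring]
  rw [eq_div_of_mul_eq (by positivity) h1, eq_div_of_mul_eq (by positivity) h2]
  push_cast
  rw [hNr]
  field_simp
  ring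

lemma raney_one_succ (hp : 0 < p) (n : ℕ) : raney p 1 (n + 1) = raney p p n := by
  simpa using raney_succ_succ hp 0 n

lemma sum_antidiagonal_raney_one_mul (hp : 0 < p) (n r : ℕ) :
    ∑ ij ∈ antidiagonal n, raney p 1 ij.1 * raney p (r + 1) ij.2 = raney p (r + 2) n := by
  induction n generalizing r with
  | zero => simp [raney_zero_right]
  | succ n ihn =>
    induction r with
    | zero =>
      have h := ihn (p - 1)
      rw [show p - 1 + 1 = p by omega, show p - 1 + 2 = 1 + p by omega] at h
      rw [Nat.sum_antidiagonal_succ', raney_succ_succ hp 1 n]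
      simp only [raney_succ_succ hp 0, raney_zero_left, zero_add, raney_zero_right one_ne_zero,
        mul_one, h]
    | succ r ihr =>
      have hsplit (j : ℕ) :
          raney p (r + 2) (j + 1) = raney p (r + 1) (j + 1) + raney p (r + 1 + p) j :=
        raney_succ_succ hp (r + 1) j
      have h := ihn (r + p)
      rw [show r + p + 1 = r + 1 + p by ring, show r + p + 2 = r + 2 + p by ring] at h
      rw [Nat.sum_antidiagonal_succ'] at ihr ⊢
      simp only [hsplit, mul_add, sum_add_distrib, h, raney_zero_right (Nat.succ_ne_zero _)]
      rw [show r + 1 + 2 = r + 2 + 1 by ring, raney_succ_succ hp (r + 2), ← ihr,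
        raney_zero_right (Nat.succ_ne_zero _)]
      ring

lemma raney_one_eq_choose_div (p n : ℕ) :
    raney (p + 1) 1 n = ((p + 1) * n).choose n / (p * n + 1) := by
  have h := Nat.choose_mul_succ_eq ((p + 1) * n) n
  rw [show (p + 1) * n + 1 - n = p * n + 1 by rw [add_one_mul]; omega] at h
  have h' : (((p + 1) * n).choose n : ℝ) * ((p + 1) * n + 1) =
      ((p + 1) * n + 1).choose n * (p * n + 1) := by
    exact_mod_cast h
  rw [raney, eq_div_iff (by positivity)]
  push_cast
  rw [mul_assoc, ← h']
  field_simp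

lemma raney_one_le (p n : ℕ) : raney (p + 1) 1 n ≤ ((p + 1) ^ (p + 1) / p ^ p : ℝ) ^ n := by
  have hchoose := Nat.choose_mul_pow_le_add_one_pow ((p + 1) * n) n p
  rw [show (p + 1) * n - n = p * n by rw [add_one_mul]; omega] at hchoose
  have hpp : (0 : ℝ) < p ^ p := by exact_mod_cast Nat.pow_self_pos
  calc raney (p + 1) 1 n = ((p + 1) * n).choose n / (p * n + 1) := raney_one_eq_choose_div p n
    _ ≤ ((p + 1) * n).choose n := div_le_self (by positivity) (by simp; positivity)
    _ ≤ ((p + 1) ^ (p + 1) / p ^ p : ℝ) ^ n := by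
      rw [div_pow, le_div_iff₀ (pow_pos hpp n), ← pow_mul, ← pow_mul]
      exact_mod_cast hchoose

variable {y : ℝ}

lemma summable_norm_raney_one_mul_pow (p : ℕ) (hy : |y| * ((p + 1) ^ (p + 1) / p ^ p) < 1) :
    Summable fun n => ‖raney (p + 1) 1 n * y ^ n‖ := by
  refine Summable.of_nonneg_of_le (fun _ => norm_nonneg _) (fun n => ?_)
    (summable_geometric_of_lt_one (by positivity) hy)
  rw [norm_mul, norm_pow, Real.norm_of_nonneg (raney_nonneg _ _ _), Real.norm_eq_abs, mul_pow,
    mul_comm]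
  exact mul_le_mul_of_nonneg_left (raney_one_le p n) (by positivity)

lemma summable_norm_raney_mul_pow (hp : 0 < p) (h : Summable fun n => ‖raney p 1 n * y ^ n‖)
    (r : ℕ) : Summable fun n => ‖raney p (r + 1) n * y ^ n‖ := by
  induction r with
  | zero => exact h
  | succ r ih =>
    simpa only [sum_antidiagonal_raney_one_mul hp] using summable_norm_sum_antidiagonal_mul_pow h ih

lemma raneySeries_one_pow (hp : 0 < p) (h : Summable fun n => ‖raney p 1 n * y ^ n‖) (r : ℕ) :
    raneySeries p 1 y ^ (r + 1) = raneySeries p (r + 1) y := by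
  induction r with
  | zero => simp
  | succ r ih =>
    rw [pow_succ', ih, raneySeries, raneySeries, raneySeries,
      tsum_mul_pow_mul_tsum_mul_pow h (summable_norm_raney_mul_pow hp h r)]
    simp only [sum_antidiagonal_raney_one_mul hp]

theorem raneySeries_one_eq_one_add_mul_pow (hp : 0 < p)
    (h : Summable fun n => ‖raney p 1 n * y ^ n‖) :
    raneySeries p 1 y = 1 + y * raneySeries p 1 y ^ p := by
  have hpow := raneySeries_one_pow hp h (p - 1)
  rw [Nat.sub_add_cancel hp] at hpow
  rw [hpow, raneySeries, raneySeries, h.of_norm.tsum_eq_zero_add, ← tsum_mul_left]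
  simp only [raney_zero_right one_ne_zero, raney_one_succ hp, pow_zero, mul_one, pow_succ]
  congr 1
  exact tsum_congr fun n => by ring

end Raney

/-- For `|c| > 27/4`, the series `S(c) = Σ (1/(2n+1))·C(3n,n)·c⁻ⁿ` converges
and its sum is a root of `x³ - cx + c`. -/
theorem hypergeometric_series_root (c : ℝ) (hc : |c| > 27 / 4) :
    Summable (fun n : ℕ =>
      (1 / (2 * (n : ℝ) + 1)) * (Nat.choose (3 * n) n : ℝ) * c⁻¹ ^ n) ∧
    (∑' n : ℕ, (1 / (2 * (n : ℝ) + 1)) * (Nat.choose (3 * n) n : ℝ) * c⁻¹ ^ n) ^ 3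
      - c * (∑' n : ℕ, (1 / (2 * (n : ℝ) + 1)) * (Nat.choose (3 * n) n : ℝ) * c⁻¹ ^ n)
      + c = 0 := by
  have hc0 : c ≠ 0 := by rintro rfl; norm_num at hc
  have hterm (n : ℕ) :
      1 / (2 * (n : ℝ) + 1) * (3 * n).choose n * c⁻¹ ^ n = raney 3 1 n * c⁻¹ ^ n := by
    rw [raney_one_eq_choose_div 2 n]
    push_cast
    ring
  have hsum : Summable fun n => ‖raney 3 1 n * c⁻¹ ^ n‖ := by
    refine summable_norm_raney_one_mul_pow 2 ?_
    rw [abs_inv, inv_mul_lt_iff₀ (abs_pos.2 hc0)]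
    norm_num
    linarith
  simp only [hterm]
  refine ⟨hsum.of_norm, ?_⟩
  have hβ := raneySeries_one_eq_one_add_mul_pow three_pos hsum
  rw [raneySeries] at hβ
  linear_combination (-c) * hβ - (∑' n, raney 3 1 n * c⁻¹ ^ n) ^ 3 * mul_inv_cancel₀ hc0
end

section
/- Let a, b be real numbers with b ≠ 0 and |4a³/(27b²)| > 1 (in particular a ≠ 0). Then the series α = (-b/a)·Σ_{n≥0} (1/(2n+1))·C(3n, n)·(-b²/a³)ⁿ converges and its sum satisfies α³ + aα + b = 0. Moreover, if 4a³/(27b²) > 1 then α is the unique real root of x³ + ax + b, and otherwise α is the unique root of x³ + ax + b satisfying |b/a| < |α| < (3/2)|b/a|. -/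
/-!
With `t = -b²/a³` and `α = (-b/a)·F(t)`, the equation `α³ + aα + b = 0` becomes `F = 1 + t F³`,
the functional equation of the generating function `F` of the numbers `C(3n,n)/(2n+1)`. It follows
from the Rothe–Hagen convolution identity for `A(k, r) = r/(3k+r)·C(3k+r, k)`, which says that
`Σ A(n, r) tⁿ` is the `r`-th power of `F = Σ A(n, 1) tⁿ`; the series converges for `|t| < 4/27`
because `C(3n,n) ≤ (27/4)ⁿ`.

If `4a³/(27b²) > 1` then `a > 0` and the cubic is strictly increasing. Otherwise `0 < t < 4/27`;
the partial sums of `F` obey `P_{N+1} ≤ 1 + t P_N³`, so they stay below the fixed point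
`1 + (27/8) t < 3/2` of that iteration, whence `1 < F < 3/2`. Two distinct roots `x, y` satisfy
`x² + xy + y² = -a` and `b = xy(x + y)`, which puts one of them outside `|x| < (3/2)|b/a|`.
-/

open Finset

noncomputable def choose3 (m r : ℕ) : ℝ := ((3 * m + r).choose m : ℝ)

-- `fuss3 k r = r/(3k+r)·C(3k+r, k)` (see `mul_fuss3`), in a division-free form that also gives
-- `fuss3 0 0 = 1`.
noncomputable def fuss3 : ℕ → ℕ → ℝ
  | 0, _ => 1
  | k + 1, r => choose3 (k + 1) r - 3 * choose3 k (r + 2)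

@[simp] theorem choose3_zero_left (r : ℕ) : choose3 0 r = 1 := by simp [choose3]

@[simp] theorem fuss3_zero_left (r : ℕ) : fuss3 0 r = 1 := rfl

theorem choose3_succ_succ (m r : ℕ) :
    choose3 (m + 1) (r + 1) = choose3 (m + 1) r + choose3 m (r + 3) := by
  simp only [choose3, show 3 * (m + 1) + (r + 1) = 3 * m + (r + 3) + 1 by ring,
    show 3 * (m + 1) + r = 3 * m + (r + 3) by ring, Nat.choose_succ_succ', Nat.cast_add]
  ring

theorem fuss3_succ_succ (k r : ℕ) :
    fuss3 (k + 1) (r + 1) = fuss3 (k + 1) r + fuss3 k (r + 3) := by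
  rcases k with _ | k
  · simp only [fuss3, choose3_succ_succ 0 r, choose3_zero_left]
    ring
  · simp only [fuss3, choose3_succ_succ (k + 1) r, choose3_succ_succ k (r + 2)]
    ring

theorem mul_fuss3 (k r : ℕ) : (3 * k + r : ℝ) * fuss3 k r = r * choose3 k r := by
  rcases k with _ | k
  · simp
  · have h := Nat.add_one_mul_choose_eq (3 * k + r + 2) k
    simp only [fuss3, choose3, show 3 * (k + 1) + r = 3 * k + r + 2 + 1 by ring,
      show 3 * k + (r + 2) = 3 * k + r + 2 by ring]
    rw [← Nat.cast_inj (R := ℝ)] at h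
    push_cast at h ⊢
    linear_combination (-3) * h

theorem fuss3_succ_zero (k : ℕ) : fuss3 (k + 1) 0 = 0 := by
  have h := mul_fuss3 (k + 1) 0
  push_cast at h
  simpa [show (3 * ((k : ℝ) + 1)) ≠ 0 by positivity] using h

theorem fuss3_nonneg (k r : ℕ) : 0 ≤ fuss3 k r := by
  rcases k with _ | k
  · simp
  · refine nonneg_of_mul_nonneg_right ?_ (by positivity : (0 : ℝ) < 3 * ((k + 1 : ℕ) : ℝ) + r)
    rw [mul_fuss3]
    unfold choose3
    positivity

theorem fuss3_one (n : ℕ) : fuss3 n 1 = 1 / (2 * (n : ℝ) + 1) * ((3 * n).choose n : ℝ) := by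
  have h := mul_fuss3 n 1
  have h' := Nat.choose_mul_succ_eq (3 * n) n
  rw [show 3 * n + 1 - n = 2 * n + 1 by omega, ← Nat.cast_inj (R := ℝ)] at h'
  simp only [choose3] at h
  push_cast at h h'
  rw [eq_comm, one_div_mul_eq_div, div_eq_iff (by positivity)]
  apply mul_left_cancel₀ (show (3 * (n : ℝ) + 1) ≠ 0 by positivity)
  linear_combination h' - (2 * (n : ℝ) + 1) * h

theorem fuss3_three (n : ℕ) : fuss3 n 3 = fuss3 (n + 1) 1 := by
  have h3 := mul_fuss3 n 3
  have h1 := mul_fuss3 (n + 1) 1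
  have h := Nat.add_one_mul_choose_eq (3 * n + 3) n
  rw [← Nat.cast_inj (R := ℝ)] at h
  simp only [choose3, show 3 * (n + 1) + 1 = 3 * n + 3 + 1 by ring] at h1 h3
  push_cast at h h1 h3
  apply mul_left_cancel₀ (show (3 * (n : ℝ) + 3) * (3 * n + 4) ≠ 0 by positivity)
  linear_combination (3 * (n : ℝ) + 4) * h3 - (3 * (n : ℝ) + 3) * h1 + 3 * h

theorem sum_antidiagonal_fuss3_mul_choose3 (n x y : ℕ) :
    ∑ p ∈ antidiagonal n, fuss3 p.1 x * choose3 p.2 y = choose3 n (x + y) := by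
  induction n generalizing x y with
  | zero => simp
  | succ n ih =>
    have step_x (x y : ℕ) : ∑ p ∈ antidiagonal (n + 1), fuss3 p.1 (x + 1) * choose3 p.2 y =
        ∑ p ∈ antidiagonal (n + 1), fuss3 p.1 x * choose3 p.2 y + choose3 n (x + 3 + y) := by
      rw [← ih, Nat.sum_antidiagonal_succ, Nat.sum_antidiagonal_succ]
      simp only [fuss3_succ_succ, fuss3_zero_left, add_mul, sum_add_distrib]
      ring
    have step_y (x y : ℕ) : ∑ p ∈ antidiagonal (n + 1), fuss3 p.1 x * choose3 p.2 (y + 1) =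
        ∑ p ∈ antidiagonal (n + 1), fuss3 p.1 x * choose3 p.2 y + choose3 n (x + (y + 3)) := by
      rw [← ih, Nat.sum_antidiagonal_succ', Nat.sum_antidiagonal_succ']
      simp only [choose3_succ_succ, choose3_zero_left, mul_add, sum_add_distrib]
      ring
    induction y with
    | zero =>
      induction x with
      | zero => simp [Nat.sum_antidiagonal_succ, fuss3_succ_zero]
      | succ x ihx =>
        rw [step_x, ihx, add_zero, add_zero, choose3_succ_succ]
    | succ y ihy =>
      rw [step_y, ihy, ← add_assoc, ← add_assoc, choose3_succ_succ]

theorem sum_antidiagonal_fuss3_mul_fuss3 (n x y : ℕ) :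
    ∑ p ∈ antidiagonal n, fuss3 p.1 x * fuss3 p.2 y = fuss3 n (x + y) := by
  rcases n with _ | n
  · simp
  · have hsplit : ∑ p ∈ antidiagonal (n + 1), fuss3 p.1 x * fuss3 p.2 y =
        ∑ p ∈ antidiagonal (n + 1), fuss3 p.1 x * choose3 p.2 y -
          3 * ∑ p ∈ antidiagonal n, fuss3 p.1 x * choose3 p.2 (y + 2) := by
      simp only [Nat.sum_antidiagonal_succ', fuss3, choose3_zero_left, mul_sub, sum_sub_distrib,
        mul_sum]
      ring_nf
    rw [hsplit, sum_antidiagonal_fuss3_mul_choose3, sum_antidiagonal_fuss3_mul_choose3, fuss3,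
      ← add_assoc]

theorem choose_three_mul_le (n : ℕ) : ((3 * n).choose n : ℝ) ≤ (27 / 4) ^ n := by
  have hterm : (1 / 3 : ℝ) ^ n * (2 / 3) ^ (3 * n - n) * ((3 * n).choose n : ℝ) ≤ 1 := by
    calc _ ≤ ∑ m ∈ range (3 * n + 1), (1 / 3 : ℝ) ^ m * (2 / 3) ^ (3 * n - m) * (3 * n).choose m :=
          single_le_sum (fun m _ => by positivity) (mem_range.mpr (by omega))
      _ = 1 := by rw [← add_pow]; norm_num
  rw [show 3 * n - n = 2 * n by omega, pow_mul, ← mul_pow] at hterm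
  calc ((3 * n).choose n : ℝ)
        = (27 / 4) ^ n * ((1 / 3 * (2 / 3) ^ 2) ^ n * (3 * n).choose n) := by
        rw [← mul_assoc, ← mul_pow]; norm_num
    _ ≤ (27 / 4) ^ n := mul_le_of_le_one_right (by positivity) hterm

theorem fuss3_one_le (n : ℕ) : fuss3 n 1 ≤ (27 / 4) ^ n := by
  rw [fuss3_one, one_div_mul_eq_div]
  exact (div_le_self (by positivity) (by linarith [n.cast_nonneg (α := ℝ)])).trans
    (choose_three_mul_le n)

theorem sum_range_sum_antidiagonal_mul_le {R : Type*} [CommSemiring R] [PartialOrder R]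
    [IsOrderedRing R] {f g : ℕ → R} (hf : ∀ i, 0 ≤ f i) (hg : ∀ j, 0 ≤ g j) (N : ℕ) :
    ∑ n ∈ range N, ∑ p ∈ antidiagonal n, f p.1 * g p.2 ≤
      (∑ i ∈ range N, f i) * ∑ j ∈ range N, g j := by
  simp only [Nat.sum_antidiagonal_eq_sum_range_succ (fun i j => f i * g j), Nat.succ_eq_add_one]
  rw [sum_range_diag_flip N (fun i j => f i * g j)]
  simp only [← mul_sum, sum_mul]
  gcongr with i hi
  · exact hf i
  · exact fun j _ _ => hg j
  · exact Nat.sub_le N i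

theorem sum_antidiagonal_fuss3_mul_pow (t : ℝ) (n x y : ℕ) :
    ∑ p ∈ antidiagonal n, fuss3 p.1 x * t ^ p.1 * (fuss3 p.2 y * t ^ p.2) =
      fuss3 n (x + y) * t ^ n := by
  rw [← sum_antidiagonal_fuss3_mul_fuss3, sum_mul]
  refine sum_congr rfl fun p hp => ?_
  rw [← mem_antidiagonal.mp hp, pow_add]
  ring

section Series

variable {t : ℝ}

theorem summable_norm_fuss3_add {x y : ℕ} (hx : Summable fun n => ‖fuss3 n x * t ^ n‖)
    (hy : Summable fun n => ‖fuss3 n y * t ^ n‖) :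
    Summable fun n => ‖fuss3 n (x + y) * t ^ n‖ := by
  simpa only [sum_antidiagonal_fuss3_mul_pow] using
    summable_norm_sum_mul_antidiagonal_of_summable_norm hx hy

theorem tsum_fuss3_add {x y : ℕ} (hx : Summable fun n => ‖fuss3 n x * t ^ n‖)
    (hy : Summable fun n => ‖fuss3 n y * t ^ n‖) :
    ∑' n, fuss3 n (x + y) * t ^ n = (∑' n, fuss3 n x * t ^ n) * ∑' n, fuss3 n y * t ^ n := by
  rw [tsum_mul_tsum_eq_tsum_sum_antidiagonal_of_summable_norm hx hy]
  simp only [sum_antidiagonal_fuss3_mul_pow]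

theorem summable_norm_fuss3_one (ht : |t| < 4 / 27) : Summable fun n => ‖fuss3 n 1 * t ^ n‖ := by
  refine (summable_geometric_of_lt_one (by positivity : 0 ≤ 27 / 4 * |t|)
    (by linarith)).of_nonneg_of_le (fun n => norm_nonneg _) fun n => ?_
  rw [norm_mul, norm_pow, Real.norm_eq_abs, Real.norm_eq_abs, abs_of_nonneg (fuss3_nonneg n 1),
    mul_pow]
  gcongr
  exact fuss3_one_le n

theorem tsum_fuss3_one_eq (ht : |t| < 4 / 27) :
    ∑' n, fuss3 n 1 * t ^ n = 1 + t * (∑' n, fuss3 n 1 * t ^ n) ^ 3 := by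
  have h1 := summable_norm_fuss3_one ht
  have h2 := summable_norm_fuss3_add h1 h1
  calc ∑' n, fuss3 n 1 * t ^ n = 1 + t * ∑' n, fuss3 n 3 * t ^ n := by
        simp only [h1.of_norm.tsum_eq_zero_add, fuss3_zero_left, pow_zero, mul_one,
          ← fuss3_three, pow_succ, ← tsum_mul_left]
        congr 1
        exact tsum_congr fun n => by ring
    _ = 1 + t * (∑' n, fuss3 n 1 * t ^ n) ^ 3 := by
        rw [show ∑' n, fuss3 n 3 * t ^ n = _ from tsum_fuss3_add h2 h1, tsum_fuss3_add h1 h1]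
        ring

theorem sum_range_fuss3_add_le (ht : 0 ≤ t) (N x y : ℕ) :
    ∑ n ∈ range N, fuss3 n (x + y) * t ^ n ≤
      (∑ n ∈ range N, fuss3 n x * t ^ n) * ∑ n ∈ range N, fuss3 n y * t ^ n := by
  simp only [← sum_antidiagonal_fuss3_mul_pow]
  exact sum_range_sum_antidiagonal_mul_le (f := fun n => fuss3 n x * t ^ n)
    (g := fun n => fuss3 n y * t ^ n) (fun i => by have := fuss3_nonneg i x; positivity)
    (fun j => by have := fuss3_nonneg j y; positivity) N

theorem sum_range_fuss3_one_le (ht : 0 ≤ t) {s : ℝ} (hs0 : 0 ≤ s) (hs : 1 + t * s ^ 3 ≤ s)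
    (N : ℕ) : ∑ n ∈ range N, fuss3 n 1 * t ^ n ≤ s := by
  induction N with
  | zero => simpa using hs0
  | succ N ih =>
    set P := fun r => ∑ n ∈ range N, fuss3 n r * t ^ n
    have hP0 : 0 ≤ P 1 := sum_nonneg fun n _ => by have := fuss3_nonneg n 1; positivity
    have hshift : ∑ n ∈ range (N + 1), fuss3 n 1 * t ^ n = 1 + t * P 3 := by
      rw [sum_range_succ', mul_sum, add_comm]
      simp only [fuss3_zero_left, pow_zero, mul_one, fuss3_three, pow_succ]
      congr 1
      exact sum_congr rfl fun n _ => by ring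
    have hP3 : P 3 ≤ P 1 ^ 3 :=
      calc P 3 ≤ P 2 * P 1 := sum_range_fuss3_add_le ht N 2 1
        _ ≤ P 1 * P 1 * P 1 := by
          gcongr
          exact sum_range_fuss3_add_le ht N 1 1
        _ = P 1 ^ 3 := by ring
    calc _ = 1 + t * P 3 := hshift
      _ ≤ 1 + t * s ^ 3 := by gcongr; exact hP3.trans (by gcongr)
      _ ≤ s := hs

theorem tsum_fuss3_one_lt_three_halves (ht0 : 0 ≤ t) (ht : t < 4 / 27) :
    ∑' n, fuss3 n 1 * t ^ n < 3 / 2 := by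
  -- `s = 1 + (27/8) t < 3/2` satisfies `1 + t s³ ≤ 1 + t (3/2)³ = s`.
  have hs : 1 + t * (1 + 27 / 8 * t) ^ 3 ≤ 1 + 27 / 8 * t := by
    have : (1 + 27 / 8 * t) ^ 3 ≤ (3 / 2) ^ 3 := by gcongr; linarith
    nlinarith
  calc ∑' n, fuss3 n 1 * t ^ n ≤ 1 + 27 / 8 * t :=
        Real.tsum_le_of_sum_range_le (fun n => by have := fuss3_nonneg n 1; positivity)
          (sum_range_fuss3_one_le ht0 (by positivity) hs)
    _ < 3 / 2 := by linarith

theorem one_add_le_tsum_fuss3_one (ht0 : 0 ≤ t) (ht : |t| < 4 / 27) :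
    1 + t ≤ ∑' n, fuss3 n 1 * t ^ n := by
  have h := (summable_norm_fuss3_one ht).of_norm.sum_le_tsum (range 2)
    fun n _ => by have := fuss3_nonneg n 1; positivity
  have h1 : fuss3 1 1 = 1 := by norm_num [fuss3, choose3]
  simpa [sum_range_succ, h1] using h

end Series

theorem cubic_eq_zero_of_eq_one_add {a b F : ℝ} (ha : a ≠ 0)
    (hF : F = 1 + (-b ^ 2 / a ^ 3) * F ^ 3) : (-b / a * F) ^ 3 + a * (-b / a * F) + b = 0 := by
  have h : (-b / a * F) ^ 3 + a * (-b / a * F) + b =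
      -b * (F - (1 + (-b ^ 2 / a ^ 3) * F ^ 3)) := by
    field_simp
    ring
  rw [h, ← hF, sub_self, mul_zero]

theorem eq_of_cubic_eq_zero_of_pos {a b x y : ℝ} (ha : 0 < a) (hx : x ^ 3 + a * x + b = 0)
    (hy : y ^ 3 + a * y + b = 0) : x = y := by
  have hfactor : (x - y) * (x ^ 2 + x * y + y ^ 2 + a) = 0 := by linear_combination hx - hy
  have hpos : 0 < x ^ 2 + x * y + y ^ 2 + a := by nlinarith [sq_nonneg (x + y)]
  exact sub_eq_zero.mp ((mul_eq_zero.mp hfactor).resolve_right hpos.ne')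

theorem three_mul_abs_mul_abs_add_le {x y : ℝ} (h : |y| ≤ |x|) :
    3 * (|y| * |x + y|) ≤ 2 * (x ^ 2 + x * y + y ^ 2) := by
  have hsq : y ^ 2 ≤ x ^ 2 := sq_le_sq.mpr h
  rcases abs_cases y with ⟨hy, _⟩ | ⟨hy, _⟩ <;>
    rcases abs_cases (x + y) with ⟨hxy, _⟩ | ⟨hxy, _⟩ <;> rw [hy, hxy] <;> nlinarith [sq_nonneg (x - y), sq_nonneg (x + 2 * y)]

theorem eq_of_cubic_eq_zero_of_abs_lt {a b x y : ℝ} (ha : a < 0) (hx : x ^ 3 + a * x + b = 0)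
    (hy : y ^ 3 + a * y + b = 0) (hx' : |x| < 3 / 2 * |b / a|) (hy' : |y| < 3 / 2 * |b / a|) :
    x = y := by
  wlog hxy : |y| ≤ |x| generalizing x y
  · exact (this hy hx hy' hx' (le_of_not_ge hxy)).symm
  by_contra hne
  have hq : x ^ 2 + x * y + y ^ 2 = -a := by
    have hfactor : (x - y) * (x ^ 2 + x * y + y ^ 2 + a) = 0 := by linear_combination hx - hy
    linarith [(mul_eq_zero.mp hfactor).resolve_left (sub_ne_zero.mpr hne)]
  have hb : |b| = |x| * (|y| * |x + y|) := by
    rw [show b = x * (y * (x + y)) by linear_combination hx - x * hq, abs_mul, abs_mul]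
  rw [abs_div, abs_of_neg ha, ← mul_div_assoc, lt_div_iff₀ (neg_pos.mpr ha)] at hx'
  nlinarith [three_mul_abs_mul_abs_add_le hxy, abs_nonneg x]

theorem abs_neg_sq_div_cube_lt {a b : ℝ} (ha : a ≠ 0) (hb : b ≠ 0)
    (hr : 1 < |4 * a ^ 3 / (27 * b ^ 2)|) : |-b ^ 2 / a ^ 3| < 4 / 27 := by
  have h := congrArg abs (show -b ^ 2 / a ^ 3 * (4 * a ^ 3 / (27 * b ^ 2)) = -(4 / 27) by
    field_simp)
  rw [abs_mul, abs_neg, abs_of_pos (by norm_num : (0 : ℝ) < 4 / 27)] at h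
  nlinarith [abs_nonneg (-b ^ 2 / a ^ 3)]

theorem hypergeometric_series_trinomial_root_general (a b : ℝ)
    (hr : |4 * a ^ 3 / (27 * b ^ 2)| > 1) :
    Summable (fun n : ℕ =>
      (1 / (2 * (n : ℝ) + 1)) * (Nat.choose (3 * n) n : ℝ) * (-b ^ 2 / a ^ 3) ^ n) ∧
    let α : ℝ := (-b / a) *
      ∑' n : ℕ, (1 / (2 * (n : ℝ) + 1)) * (Nat.choose (3 * n) n : ℝ) *
        (-b ^ 2 / a ^ 3) ^ n
    α ^ 3 + a * α + b = 0 ∧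
    (4 * a ^ 3 / (27 * b ^ 2) > 1 →
      ∀ x : ℝ, x ^ 3 + a * x + b = 0 → x = α) ∧
    (¬ (4 * a ^ 3 / (27 * b ^ 2) > 1) →
      |b / a| < |α| ∧ |α| < (3 / 2) * |b / a| ∧
      ∀ x : ℝ, x ^ 3 + a * x + b = 0 →
        |b / a| < |x| → |x| < (3 / 2) * |b / a| → x = α) := by
  have ha : a ≠ 0 := by rintro rfl; norm_num at hr
  have hb : b ≠ 0 := by rintro rfl; norm_num at hr
  have ht := abs_neg_sq_div_cube_lt ha hb hr
  simp only [← fuss3_one]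
  refine ⟨(summable_norm_fuss3_one ht).of_norm, ?_⟩
  set F := ∑' n, fuss3 n 1 * (-b ^ 2 / a ^ 3) ^ n
  set α := -b / a * F with hα_def
  have hroot : α ^ 3 + a * α + b = 0 := cubic_eq_zero_of_eq_one_add ha (tsum_fuss3_one_eq ht)
  refine ⟨hroot, fun hu x hx => ?_, fun hu => ?_⟩
  · rw [gt_iff_lt, one_lt_div (by positivity)] at hu
    have ha0 : 0 < a := (Odd.pow_pos_iff (by decide : Odd 3)).mp (by nlinarith [sq_nonneg b])
    exact eq_of_cubic_eq_zero_of_pos ha0 hx hroot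
  · have hu' : 4 * a ^ 3 / (27 * b ^ 2) < -1 := by linarith [(lt_abs.mp hr).resolve_left hu]
    rw [div_lt_iff₀ (by positivity)] at hu'
    have ha0 : a < 0 := (Odd.pow_neg_iff (by decide : Odd 3)).mp (by nlinarith [sq_nonneg b])
    have ht0 : 0 < -b ^ 2 / a ^ 3 := div_pos_of_neg_of_neg (by nlinarith [sq_pos_of_ne_zero hb])
      (Odd.pow_neg (by decide) ha0)
    have hF1 : 1 + -b ^ 2 / a ^ 3 ≤ F := one_add_le_tsum_fuss3_one ht0.le ht
    have hF2 : F < 3 / 2 := tsum_fuss3_one_lt_three_halves ht0.le (abs_lt.mp ht).2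
    have hα : |α| = |b / a| * F := by
      rw [hα_def, abs_mul, neg_div, abs_neg, abs_of_pos (by linarith : 0 < F)]
    have hba : 0 < |b / a| := abs_pos.mpr (div_ne_zero hb ha)
    have hα2 : |α| < 3 / 2 * |b / a| := by rw [hα]; nlinarith
    exact ⟨by rw [hα]; nlinarith, hα2,
      fun x hx _ hx' => eq_of_cubic_eq_zero_of_abs_lt ha0 hx hroot hx' hα2⟩

/-- For `|4a³/(27b²)| > 1`, the hypergeometric series
`α = (-b/a)·Σ (1/(2n+1))·C(3n,n)·(-b²/a³)ⁿ` converges to a root of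
`x³ + ax + b`; if `4a³/(27b²) > 1` this is the unique real root, and
otherwise it is the unique root with `|b/a| < |α| < (3/2)|b/a|`. -/
theorem hypergeometric_series_trinomial_root (a b : ℝ) (hb : b ≠ 0)
    (hr : |4 * a ^ 3 / (27 * b ^ 2)| > 1) :
    Summable (fun n : ℕ =>
      (1 / (2 * (n : ℝ) + 1)) * (Nat.choose (3 * n) n : ℝ) * (-b ^ 2 / a ^ 3) ^ n) ∧
    let α : ℝ := (-b / a) *
      ∑' n : ℕ, (1 / (2 * (n : ℝ) + 1)) * (Nat.choose (3 * n) n : ℝ) *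
        (-b ^ 2 / a ^ 3) ^ n
    α ^ 3 + a * α + b = 0 ∧
    (4 * a ^ 3 / (27 * b ^ 2) > 1 →
      ∀ x : ℝ, x ^ 3 + a * x + b = 0 → x = α) ∧
    (¬ (4 * a ^ 3 / (27 * b ^ 2) > 1) →
      |b / a| < |α| ∧ |α| < (3 / 2) * |b / a| ∧
      ∀ x : ℝ, x ^ 3 + a * x + b = 0 →
        |b / a| < |x| → |x| < (3 / 2) * |b / a| → x = α) :=
  hypergeometric_series_trinomial_root_general a b hr
end

section
/- Let c be a real number with c > 27/4 and let β = S(c). Then 0 < β - 1 < 27/(8c); in particular 1 < β < 3/2. -/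
/-!
The coefficients `T n = C(3n, n) / (2n + 1)` of the series are the ternary Catalan numbers, and
their generating function `U = ∑ T n Xⁿ` satisfies `U = 1 + X U³`: a solution exists by Hensel's
lemma, and every solution is annihilated by a hypergeometric differential operator whose coefficient
recurrence is the one of `T`. Hence `T (n + 1) = ∑_{i+j+k=n} T i T j T k`, so the partial sums
`P N` of `β = ∑ T n xⁿ` satisfy `P (N + 1) ≤ 1 + x P N ^ 3`. For `x ≤ 4/27` this gives `P N ≤ 3/2`
and `β ≤ 1 + x β³`. With `x = 1/c < 4/27`, equality `β = 3/2` would force `x ≥ 4/27`, so `β < 3/2`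
and `β - 1 ≤ x β³ < 27x/8`.
-/

open Finset PowerSeries

noncomputable def ternaryCatalan (n : ℕ) : ℝ := (3 * n).choose n / (2 * n + 1)

theorem ternaryCatalan_zero : ternaryCatalan 0 = 1 := by simp [ternaryCatalan]

theorem ternaryCatalan_one : ternaryCatalan 1 = 1 := by norm_num [ternaryCatalan]

theorem ternaryCatalan_nonneg (n : ℕ) : 0 ≤ ternaryCatalan n := by
  unfold ternaryCatalan; positivity

theorem ternaryCatalan_succ (n : ℕ) :
    2 * (n + 1) * (2 * n + 3) * ternaryCatalan (n + 1) =
      3 * (3 * n + 1) * (3 * n + 2) * ternaryCatalan n := by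
  have h₁ := Nat.add_one_mul_choose_eq (3 * n + 2) n
  have h₂ := Nat.choose_mul_succ_eq (3 * n + 1) n
  have h₃ := Nat.choose_mul_succ_eq (3 * n) n
  rw [show 3 * n + 2 + 1 = 3 * (n + 1) by ring] at h₁
  rw [show 3 * n + 1 + 1 - n = 2 * n + 2 by omega, show 3 * n + 1 + 1 = 3 * n + 2 by ring] at h₂
  rw [show 3 * n + 1 - n = 2 * n + 1 by omega] at h₃
  have e₁ := congr(($h₁ : ℝ))
  have e₂ := congr(($h₂ : ℝ))
  have e₃ := congr(($h₃ : ℝ))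
  push_cast at e₁ e₂ e₃
  have key : 2 * (n + 1) * ((3 * (n + 1)).choose (n + 1) : ℝ) * (2 * n + 1) =
      3 * (3 * n + 1) * (3 * n + 2) * (3 * n).choose n := by
    apply mul_left_cancel₀ (show (n : ℝ) + 1 ≠ 0 by positivity)
    linear_combination (-2 * (n + 1) * (2 * n + 1) : ℝ) * e₁ - 3 * (n + 1) * (2 * n + 1) * e₂
      - 3 * (n + 1) * (3 * n + 2) * e₃
  unfold ternaryCatalan
  push_cast
  field_simp
  linear_combination (2 * n + 3 : ℝ) * key

theorem Derivation.map_ofNat {R A M : Type*} [CommSemiring R] [CommSemiring A] [AddCommMonoid M]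
    [Algebra R A] [Module A M] [Module R M] (D : Derivation R A M) (n : ℕ) [n.AtLeastTwo] :
    D (ofNat(n) : A) = 0 := by
  rw [← Nat.cast_ofNat, D.map_natCast]

namespace PowerSeries

variable (R : Type*) [CommSemiring R]

noncomputable def eulerDeriv : Derivation R R⟦X⟧ R⟦X⟧ := (X : R⟦X⟧) • d⁄dX R

variable {R}

theorem eulerDeriv_apply (f : R⟦X⟧) : eulerDeriv R f = X * d⁄dX R f := rfl

@[simp]
theorem eulerDeriv_X : eulerDeriv R X = X := by simp [eulerDeriv_apply]

@[simp]
theorem coeff_eulerDeriv (f : R⟦X⟧) (n : ℕ) : coeff n (eulerDeriv R f) = n * coeff n f := by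
  rcases n with _ | n
  · simp [eulerDeriv_apply]
  · rw [eulerDeriv_apply, coeff_succ_X_mul, coeff_derivative, mul_comm]
    push_cast; rfl

@[simp]
theorem coeff_ofNat_mul (φ : R⟦X⟧) (m n : ℕ) [m.AtLeastTwo] :
    coeff n ((ofNat(m) : R⟦X⟧) * φ) = ofNat(m) * coeff n φ := by
  rw [← map_ofNat C, coeff_C_mul]

end PowerSeries

/-- Hensel's lemma in `R⟦X⟧` (complete for the `X`-adic topology) gives a root `W ≡ 1` of the
monic `W³ - W² + X`, a simple root modulo `X`; then `V = W⁻¹` solves `V = 1 + X V³`. -/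
theorem exists_eq_one_add_X_mul_cube (R : Type*) [CommRing R] :
    ∃ V : R⟦X⟧, V = 1 + X * V ^ 3 := by
  let f : Polynomial R⟦X⟧ := .X ^ 3 - .X ^ 2 + .C X
  have hf : f.Monic := by simp only [f]; monicity!
  obtain ⟨W, hW, hW1⟩ := HenselianRing.is_henselian (I := Ideal.span {X}) f hf 1
    (by simp [f]) (by simp [f, map_ofNat]; norm_num)
  have hW0 : constantCoeff W = 1 := by
    obtain ⟨q, hq⟩ := Ideal.mem_span_singleton'.1 hW1
    have := congrArg constantCoeff hq
    simp only [map_mul, constantCoeff_X, mul_zero, map_sub, constantCoeff_one] at this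
    linear_combination -this
  obtain ⟨u, rfl⟩ := isUnit_iff_constantCoeff.2 (hW0 ▸ isUnit_one)
  have hroot : (u : R⟦X⟧) ^ 3 - (u : R⟦X⟧) ^ 2 + X = 0 := by simpa [f] using hW
  refine ⟨↑u⁻¹, ?_⟩
  linear_combination (-(↑u⁻¹ : R⟦X⟧) ^ 3) * hroot
    + ((u * ↑u⁻¹ : R⟦X⟧) ^ 2 + u * ↑u⁻¹ + 1 - ↑u⁻¹ * (u * ↑u⁻¹ + 1)) * u.mul_inv

section CubicEquation

variable {R : Type*} [CommRing R] {V : R⟦X⟧}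

local notation "θ" => eulerDeriv R

theorem constantCoeff_of_eq_one_add_X_mul_cube (hV : V = 1 + X * V ^ 3) :
    constantCoeff V = 1 := by
  rw [hV]; simp

theorem three_sub_two_mul_mul_eulerDeriv (hV : V = 1 + X * V ^ 3) :
    (3 - 2 * V) * θ V = V * (V - 1) := by
  have h := congrArg θ hV
  simp only [map_add, Derivation.map_one_eq_zero, Derivation.leibniz, Derivation.leibniz_pow,
    eulerDeriv_X, smul_eq_mul, nsmul_eq_mul] at h
  linear_combination V * h - (3 * θ V + V) * hV

theorem three_sub_two_mul_mul_eulerDeriv_eulerDeriv (hV : V = 1 + X * V ^ 3) :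
    (3 - 2 * V) * θ (θ V) = θ V * (2 * θ V + 2 * V - 1) := by
  have h := congrArg θ (three_sub_two_mul_mul_eulerDeriv hV)
  simp only [map_sub, Derivation.leibniz, Derivation.map_ofNat, Derivation.map_one_eq_zero,
    smul_eq_mul] at h
  linear_combination h

theorem eulerDeriv_hypergeometric_ode (hV : V = 1 + X * V ^ 3) :
    4 * θ (θ V) + 2 * θ V = X * (27 * θ (θ V) + 27 * θ V + 6 * V) := by
  have h₁ := three_sub_two_mul_mul_eulerDeriv hV
  have h₂ := three_sub_two_mul_mul_eulerDeriv_eulerDeriv hV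
  have hs : (3 - 2 * V) ^ 3 * θ (θ V) = V * (V - 1) * (-2 * V ^ 2 + 6 * V - 3) := by
    linear_combination (3 - 2 * V) ^ 2 * h₂
      + ((3 - 2 * V) * (2 * θ V + 2 * V - 1) + 2 * V * (V - 1)) * h₁
  have ht : (3 - 2 * V) ^ 3 * θ V = V * (V - 1) * (3 - 2 * V) ^ 2 := by
    linear_combination (3 - 2 * V) ^ 2 * h₁
  have hunit : IsUnit (V ^ 3 * (3 - 2 * V) ^ 3) := isUnit_iff_constantCoeff.2 <| by
    simp [constantCoeff_of_eq_one_add_X_mul_cube hV, map_ofNat]; norm_num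
  -- after clearing the unit, `X` only occurs as `X * V ^ 3 = V - 1`
  apply hunit.mul_left_cancel
  linear_combination (4 * V ^ 3 - 27 * X * V ^ 3) * hs + (2 * V ^ 3 - 27 * X * V ^ 3) * ht
    + 6 * V ^ 4 * hV

theorem coeff_succ_of_eq_one_add_X_mul_cube (hV : V = 1 + X * V ^ 3) (n : ℕ) :
    2 * (n + 1) * (2 * n + 3) * coeff (n + 1) V =
      3 * (3 * n + 1) * (3 * n + 2) * coeff n V := by
  have h := congrArg (coeff (n + 1)) (eulerDeriv_hypergeometric_ode hV)
  simp only [map_add, coeff_ofNat_mul, coeff_eulerDeriv, Nat.cast_add, Nat.cast_one,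
    coeff_succ_X_mul] at h
  linear_combination h

end CubicEquation

theorem eq_mk_ternaryCatalan {V : ℝ⟦X⟧} (hV : V = 1 + X * V ^ 3) :
    V = PowerSeries.mk ternaryCatalan := by
  ext n
  rw [coeff_mk]
  induction n with
  | zero => simpa [ternaryCatalan_zero] using constantCoeff_of_eq_one_add_X_mul_cube hV
  | succ n ih =>
    have h := coeff_succ_of_eq_one_add_X_mul_cube hV n
    rw [ih, ← ternaryCatalan_succ] at h
    exact mul_left_cancel₀ (by positivity) h

theorem mk_ternaryCatalan_eq_one_add_X_mul_cube :
    PowerSeries.mk ternaryCatalan = 1 + X * PowerSeries.mk ternaryCatalan ^ 3 := by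
  obtain ⟨V, hV⟩ := exists_eq_one_add_X_mul_cube ℝ
  rwa [← eq_mk_ternaryCatalan hV]

theorem ternaryCatalan_succ_eq_coeff_cube (n : ℕ) :
    ternaryCatalan (n + 1) = coeff n (PowerSeries.mk ternaryCatalan ^ 3) := by
  simpa [coeff_succ_X_mul] using congrArg (coeff (n + 1)) mk_ternaryCatalan_eq_one_add_X_mul_cube

section PartialSums

variable {R : Type*} [CommSemiring R] [PartialOrder R] [IsOrderedRing R]

theorem sum_range_sum_antidiagonal_le_mul {f g : ℕ → R} (hf : ∀ n, 0 ≤ f n)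
    (hg : ∀ n, 0 ≤ g n) (N : ℕ) :
    ∑ n ∈ range N, ∑ p ∈ antidiagonal n, f p.1 * g p.2 ≤
      (∑ n ∈ range N, f n) * ∑ n ∈ range N, g n := by
  simp_rw [Nat.sum_antidiagonal_eq_sum_range_succ (fun i j ↦ f i * g j), Nat.succ_eq_add_one]
  rw [sum_range_diag_flip N fun i j ↦ f i * g j, sum_mul]
  gcongr with m
  rw [← mul_sum]
  exact mul_le_mul_of_nonneg_left
    (sum_le_sum_of_subset_of_nonneg (range_subset_range.2 (Nat.sub_le N m)) fun k _ _ ↦ hg k)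
    (hf m)

theorem coeff_mul_nonneg {φ ψ : R⟦X⟧} (hφ : ∀ n, 0 ≤ coeff n φ) (hψ : ∀ n, 0 ≤ coeff n ψ)
    (n : ℕ) : 0 ≤ coeff n (φ * ψ) := by
  rw [coeff_mul]
  exact sum_nonneg fun p _ ↦ mul_nonneg (hφ p.1) (hψ p.2)

theorem sum_range_coeff_mul_le {φ ψ : R⟦X⟧} (hφ : ∀ n, 0 ≤ coeff n φ) (hψ : ∀ n, 0 ≤ coeff n ψ)
    {x : R} (hx : 0 ≤ x) (N : ℕ) :
    ∑ n ∈ range N, coeff n (φ * ψ) * x ^ n ≤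
      (∑ n ∈ range N, coeff n φ * x ^ n) * ∑ n ∈ range N, coeff n ψ * x ^ n :=
  calc ∑ n ∈ range N, coeff n (φ * ψ) * x ^ n
      = ∑ n ∈ range N, ∑ p ∈ antidiagonal n,
          (coeff p.1 φ * x ^ p.1) * (coeff p.2 ψ * x ^ p.2) := by
        refine sum_congr rfl fun n _ ↦ ?_
        rw [coeff_mul, sum_mul]
        refine sum_congr rfl fun p hp ↦ ?_
        rw [← mem_antidiagonal.1 hp, pow_add]
        ring
    _ ≤ _ := sum_range_sum_antidiagonal_le_mul (fun n ↦ mul_nonneg (hφ n) (pow_nonneg hx n))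
        (fun n ↦ mul_nonneg (hψ n) (pow_nonneg hx n)) N

end PartialSums

section Series

variable {x : ℝ}

theorem ternaryCatalan_mul_pow_nonneg (hx₀ : 0 ≤ x) (n : ℕ) : 0 ≤ ternaryCatalan n * x ^ n :=
  mul_nonneg (ternaryCatalan_nonneg n) (pow_nonneg hx₀ n)

theorem sum_range_succ_ternaryCatalan_le (hx₀ : 0 ≤ x) (N : ℕ) :
    ∑ n ∈ range (N + 1), ternaryCatalan n * x ^ n ≤
      1 + x * (∑ n ∈ range N, ternaryCatalan n * x ^ n) ^ 3 := by
  have hsucc (n : ℕ) : ternaryCatalan (n + 1) * x ^ (n + 1) = x * (coeff n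
      (PowerSeries.mk ternaryCatalan * (PowerSeries.mk ternaryCatalan *
        PowerSeries.mk ternaryCatalan)) * x ^ n) := by
    rw [ternaryCatalan_succ_eq_coeff_cube, pow_three, pow_succ]
    ring
  set U := PowerSeries.mk ternaryCatalan
  have hU (n : ℕ) : 0 ≤ coeff n U := by simpa [U] using ternaryCatalan_nonneg n
  have hP : ∑ n ∈ range N, ternaryCatalan n * x ^ n = ∑ n ∈ range N, coeff n U * x ^ n := by
    simp [U]
  have hP₀ : 0 ≤ ∑ n ∈ range N, coeff n U * x ^ n :=
    sum_nonneg fun n _ ↦ mul_nonneg (hU n) (pow_nonneg hx₀ n)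
  calc ∑ n ∈ range (N + 1), ternaryCatalan n * x ^ n
      = 1 + x * ∑ n ∈ range N, coeff n (U * (U * U)) * x ^ n := by
        simp_rw [sum_range_succ', hsucc, ternaryCatalan_zero, mul_sum]
        ring
    _ ≤ 1 + x * ((∑ n ∈ range N, coeff n U * x ^ n) *
          ((∑ n ∈ range N, coeff n U * x ^ n) * ∑ n ∈ range N, coeff n U * x ^ n)) := by
        gcongr
        refine (sum_range_coeff_mul_le hU (coeff_mul_nonneg hU hU) hx₀ N).trans ?_
        gcongr
        exact sum_range_coeff_mul_le hU hU hx₀ N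
    _ = 1 + x * (∑ n ∈ range N, ternaryCatalan n * x ^ n) ^ 3 := by rw [hP]; ring

theorem sum_range_ternaryCatalan_le (hx₀ : 0 ≤ x) (hx : x ≤ 4 / 27) (N : ℕ) :
    ∑ n ∈ range N, ternaryCatalan n * x ^ n ≤ 3 / 2 := by
  induction N with
  | zero => norm_num
  | succ N ih =>
    have h₀ := sum_nonneg fun n (_ : n ∈ range N) ↦ ternaryCatalan_mul_pow_nonneg hx₀ n
    calc _ ≤ 1 + x * (∑ n ∈ range N, ternaryCatalan n * x ^ n) ^ 3 :=
          sum_range_succ_ternaryCatalan_le hx₀ N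
      _ ≤ 1 + 4 / 27 * (3 / 2) ^ 3 := by gcongr
      _ = 3 / 2 := by norm_num

theorem summable_ternaryCatalan_mul_pow (hx₀ : 0 ≤ x) (hx : x ≤ 4 / 27) :
    Summable fun n ↦ ternaryCatalan n * x ^ n :=
  summable_of_sum_range_le (ternaryCatalan_mul_pow_nonneg hx₀) (sum_range_ternaryCatalan_le hx₀ hx)

theorem tsum_ternaryCatalan_mul_pow_le (hx₀ : 0 ≤ x) (hx : x ≤ 4 / 27) :
    ∑' n, ternaryCatalan n * x ^ n ≤ 3 / 2 :=
  Real.tsum_le_of_sum_range_le (ternaryCatalan_mul_pow_nonneg hx₀)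
    (sum_range_ternaryCatalan_le hx₀ hx)

theorem sum_range_le_tsum_ternaryCatalan_mul_pow (hx₀ : 0 ≤ x) (hx : x ≤ 4 / 27) (N : ℕ) :
    ∑ n ∈ range N, ternaryCatalan n * x ^ n ≤ ∑' n, ternaryCatalan n * x ^ n :=
  (summable_ternaryCatalan_mul_pow hx₀ hx).sum_le_tsum _ fun n _ ↦
    ternaryCatalan_mul_pow_nonneg hx₀ n

theorem one_add_le_tsum_ternaryCatalan_mul_pow (hx₀ : 0 ≤ x) (hx : x ≤ 4 / 27) :
    1 + x ≤ ∑' n, ternaryCatalan n * x ^ n := by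
  simpa [sum_range_succ, ternaryCatalan_zero, ternaryCatalan_one] using
    sum_range_le_tsum_ternaryCatalan_mul_pow hx₀ hx 2

theorem tsum_ternaryCatalan_mul_pow_le_one_add_mul_cube (hx₀ : 0 ≤ x) (hx : x ≤ 4 / 27) :
    ∑' n, ternaryCatalan n * x ^ n ≤ 1 + x * (∑' n, ternaryCatalan n * x ^ n) ^ 3 := by
  have hβ₀ : 0 ≤ ∑' n, ternaryCatalan n * x ^ n :=
    tsum_nonneg (ternaryCatalan_mul_pow_nonneg hx₀)
  refine Real.tsum_le_of_sum_range_le (ternaryCatalan_mul_pow_nonneg hx₀) fun N ↦ ?_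
  rcases N with _ | N
  · simp only [range_zero, sum_empty]
    positivity
  · refine (sum_range_succ_ternaryCatalan_le hx₀ N).trans ?_
    have h₀ := sum_nonneg fun n (_ : n ∈ range N) ↦ ternaryCatalan_mul_pow_nonneg hx₀ n
    gcongr
    exact sum_range_le_tsum_ternaryCatalan_mul_pow hx₀ hx N

end Series

theorem sub_one_lt_of_le_one_add_mul_cube {x β : ℝ} (hx₀ : 0 < x) (hx : x < 4 / 27)
    (hβ₀ : 0 ≤ β) (hβ : β ≤ 3 / 2) (h : β ≤ 1 + x * β ^ 3) : β - 1 < 27 / 8 * x := by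
  by_contra! h'
  have hcube : (3 / 2) ^ 3 ≤ β ^ 3 := by nlinarith
  have hβ' : β = 3 / 2 := le_antisymm hβ (le_of_pow_le_pow_left₀ three_ne_zero hβ₀ hcube)
  subst hβ'
  linarith

/-- For `c > 27/4` and `β = S(c)` we have `0 < β - 1 < 27/(8c)`;
in particular `1 < β < 3/2`. -/
theorem hypergeometric_sum_bounds (c : ℝ) (hc : c > 27 / 4) :
    let β : ℝ :=
      ∑' n : ℕ, (1 / (2 * (n : ℝ) + 1)) * (Nat.choose (3 * n) n : ℝ) * c⁻¹ ^ n
    0 < β - 1 ∧ β - 1 < 27 / (8 * c) ∧ 1 < β ∧ β < 3 / 2 := by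
  intro β
  have hc₀ : 0 < c := by linarith
  have hx₀ : 0 < c⁻¹ := inv_pos.2 hc₀
  have hx : c⁻¹ < 4 / 27 := inv_lt_of_inv_lt₀ (by norm_num) (by norm_num; linarith)
  have hβ : β = ∑' n, ternaryCatalan n * c⁻¹ ^ n :=
    tsum_congr fun n ↦ by rw [ternaryCatalan]; ring
  have h₁ := one_add_le_tsum_ternaryCatalan_mul_pow hx₀.le hx.le
  have h₂ := tsum_ternaryCatalan_mul_pow_le hx₀.le hx.le
  have h₃ := tsum_ternaryCatalan_mul_pow_le_one_add_mul_cube hx₀.le hx.le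
  rw [← hβ] at h₁ h₂ h₃
  have key := sub_one_lt_of_le_one_add_mul_cube hx₀ hx (by linarith) h₂ h₃
  have hc' : 27 / (8 * c) = 27 / 8 * c⁻¹ := by field_simp
  exact ⟨by linarith, hc' ▸ key, by linarith, by linarith⟩
end

section
/- Let c be a rational number with |c| > 27/4. The generalized continued fraction with coefficients a(0) = 1, a(1) = 6c, a(n) = (4c + 27)n² + (2c - 27)n + 6 for n ≥ 2, b(0) = 6, and b(n) = -6cn(2n+1)(3n+1)(3n+2) for n ≥ 1 converges to S(c); that is, its convergents pₙ/qₙ are defined (qₙ ≠ 0 for all sufficiently large n) and pₙ/qₙ → S(c). In particular S(c) ∈ 𝒞. -/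
open Finset Filter
open scoped Nat

theorem Nat.choose_three_mul_succ_mul (n : ℕ) :
    (3 * (n + 1)).choose (n + 1) * ((2 * n + 1) * (2 * n + 2)) =
      3 * (3 * n + 1) * (3 * n + 2) * (3 * n).choose n := by
  have h₁ := Nat.add_one_mul_choose_eq (3 * n + 2) n
  have h₂ := Nat.choose_mul_succ_eq (3 * n + 1) n
  have h₃ := Nat.choose_mul_succ_eq (3 * n) n
  rw [show 3 * n + 1 + 1 - n = 2 * n + 2 by omega] at h₂
  rw [show 3 * n + 1 - n = 2 * n + 1 by omega] at h₃
  apply Nat.eq_of_mul_eq_mul_right (show 0 < n + 1 by omega)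
  rw [show 3 * (n + 1) = 3 * n + 2 + 1 by ring]
  linear_combination (2 * n + 1) * (2 * n + 2) * h₁.symm + (3 * n + 3) * (2 * n + 1) * h₂.symm +
    (3 * n + 3) * (3 * n + 2) * h₃.symm

theorem Nat.factorial_two_mul_succ_add_one (n : ℕ) :
    (2 * (n + 1) + 1)! = (2 * n + 3) * (2 * n + 2) * (2 * n + 1)! := by
  rw [show 2 * (n + 1) + 1 = 2 * n + 1 + 1 + 1 by ring, Nat.factorial_succ, Nat.factorial_succ]
  ring

theorem cfP_eq_cfQ_mul_sum {a b t : ℕ → ℚ} (h₀ : a 0 = t 0) (h₁ : b 0 = a 1 * t 1)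
    (hstep : ∀ n, a (n + 2) * cfQ a b (n + 1) * t (n + 2) +
      b (n + 1) * cfQ a b n * (t (n + 1) + t (n + 2)) = 0) (n : ℕ) :
    cfP a b n = cfQ a b n * ∑ k ∈ range (n + 1), t k := by
  induction n using Nat.twoStepInduction with
  | zero => simp [cfP, cfQ, h₀]
  | one =>
    simp [cfP, cfQ, sum_range_succ, h₀, h₁]
    ring
  | more n ih₀ ih₁ =>
    rw [cfP, cfQ, ih₀, ih₁, sum_range_succ _ (n + 2), sum_range_succ _ (n + 1)]
    linear_combination -hstep n

theorem cfConvergesTo_of_cfP_eq_cfQ_mul_sum {a b t : ℕ → ℚ} {u : ℝ} (hb : ∀ n, b n ≠ 0)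
    (hQ : ∀ n, cfQ a b n ≠ 0) (hP : ∀ n, cfP a b n = cfQ a b n * ∑ k ∈ range (n + 1), t k)
    (ht : HasSum (fun k => (t k : ℝ)) u) : CFConvergesTo a b u := by
  refine ⟨hb, ⟨0, fun n _ => hQ n⟩, ?_⟩
  refine (ht.tendsto_sum_nat.comp (tendsto_add_atTop_nat 1)).congr fun n => ?_
  rw [Function.comp_apply, hP, Rat.cast_mul, mul_div_cancel_left₀ _ (Rat.cast_ne_zero.2 (hQ n)),
    Rat.cast_sum]

section Series

variable {K : Type*} [Field K]

/-- `C(3n, n)/(2n+1)` is the Fuss–Catalan number of ternary trees;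
`S(c) = ∑ₙ fussCatalanTerm c⁻¹ n`. -/
def fussCatalanTerm (x : K) (n : ℕ) : K :=
  1 / (2 * (n : K) + 1) * (Nat.choose (3 * n) n : K) * x ^ n

theorem fussCatalanTerm_succ [CharZero K] (x : K) (n : ℕ) :
    (2 * n + 2) * (2 * n + 3) * fussCatalanTerm x (n + 1) =
      3 * (3 * n + 1) * (3 * n + 2) * x * fussCatalanTerm x n := by
  have h := congrArg (Nat.cast : ℕ → K) (Nat.choose_three_mul_succ_mul n)
  push_cast at h
  have h₁ : (2 * (n : K) + 1) ≠ 0 := by exact_mod_cast (by omega : 2 * n + 1 ≠ 0)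
  have h₂ : (2 * ((n : K) + 1) + 1) ≠ 0 := by exact_mod_cast (by omega : 2 * (n + 1) + 1 ≠ 0)
  simp only [fussCatalanTerm]
  push_cast
  field_simp
  linear_combination (2 * (n : K) + 3) * x ^ (n + 1) * h

@[simp, norm_cast]
theorem Rat.cast_fussCatalanTerm [CharZero K] (x : ℚ) (n : ℕ) :
    ((fussCatalanTerm x n : ℚ) : K) = fussCatalanTerm (x : K) n := by
  simp [fussCatalanTerm]

theorem summable_fussCatalanTerm {𝕜 : Type*} [RCLike 𝕜] {x : 𝕜} (hx : ‖x‖ < 4 / 27) :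
    Summable (fussCatalanTerm x) := by
  refine summable_of_ratio_norm_eventually_le (r := 27 / 4 * ‖x‖) (by linarith)
    (.of_forall fun n => ?_)
  have h : (((2 * n + 2) * (2 * n + 3) : ℕ) : 𝕜) * fussCatalanTerm x (n + 1) =
      ((3 * (3 * n + 1) * (3 * n + 2) : ℕ) : 𝕜) * x * fussCatalanTerm x n := by
    exact_mod_cast fussCatalanTerm_succ x n
  replace h := congrArg norm h
  simp only [norm_mul, RCLike.norm_natCast] at h
  push_cast at h
  have hpos : (0 : ℝ) < (2 * n + 2) * (2 * n + 3) := by positivity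
  rw [← mul_le_mul_iff_of_pos_left hpos, h]
  have := mul_nonneg (norm_nonneg x) (norm_nonneg (fussCatalanTerm x n))
  -- `4 · 3(3n+1)(3n+2) ≤ 27 (2n+2)(2n+3)`, with equality only in the limit
  nlinarith

end Series

namespace EulerCF

def a (c : ℚ) (n : ℕ) : ℚ :=
  if n = 0 then 1 else if n = 1 then 6 * c
  else (4 * c + 27) * (n : ℚ) ^ 2 + (2 * c - 27) * (n : ℚ) + 6

def b (c : ℚ) (n : ℕ) : ℚ :=
  if n = 0 then 6
  else -6 * c * (n : ℚ) * (2 * (n : ℚ) + 1) * (3 * (n : ℚ) + 1) * (3 * (n : ℚ) + 2)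

theorem a_add_two (c : ℚ) (n : ℕ) :
    a c (n + 2) = (4 * c + 27) * ((n : ℚ) + 2) ^ 2 + (2 * c - 27) * ((n : ℚ) + 2) + 6 := by
  simp [a]

theorem b_succ (c : ℚ) (n : ℕ) :
    b c (n + 1) = -6 * c * ((n : ℚ) + 1) * (2 * n + 3) * (3 * n + 4) * (3 * n + 5) := by
  simp [b]; ring

theorem b_ne_zero {c : ℚ} (hc : c ≠ 0) (n : ℕ) : b c n ≠ 0 := by
  cases n with
  | zero => simp [b]
  | succ n =>
    rw [b_succ]
    positivity

theorem cfPolyType (c : ℚ) : CFPolyType (a c) (b c) := by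
  open Polynomial in
  refine ⟨C (4 * c + 27) * X ^ 2 + C (2 * c - 27) * X + 6,
    C (-6 * c) * X * (2 * X + 1) * (3 * X + 1) * (3 * X + 2), 2, fun n hn => ?_⟩
  obtain ⟨n, rfl⟩ := Nat.exists_eq_add_of_le' hn
  constructor
  · simp [a_add_two]
  · simp [b_succ]
    ring

theorem cfQ_eq (c : ℚ) (n : ℕ) : cfQ (a c) (b c) n = (2 * n + 1)! * c ^ n := by
  induction n using Nat.twoStepInduction with
  | zero => simp [cfQ]
  | one => simp [cfQ, a, Nat.factorial]
  | more n ih₀ ih₁ =>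
    rw [cfQ, ih₀, ih₁, a_add_two, b_succ, Nat.factorial_two_mul_succ_add_one (n + 1),
      Nat.factorial_two_mul_succ_add_one n]
    push_cast
    ring

theorem step_eq_zero {c : ℚ} (hc : c ≠ 0) (n : ℕ) :
    a c (n + 2) * cfQ (a c) (b c) (n + 1) * fussCatalanTerm c⁻¹ (n + 2) +
      b c (n + 1) * cfQ (a c) (b c) n *
        (fussCatalanTerm c⁻¹ (n + 1) + fussCatalanTerm c⁻¹ (n + 2)) = 0 := by
  have h := fussCatalanTerm_succ c⁻¹ (n + 1)
  have hc' : c * c⁻¹ = 1 := mul_inv_cancel₀ hc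
  rw [cfQ_eq, cfQ_eq, a_add_two, b_succ, Nat.factorial_two_mul_succ_add_one]
  push_cast at h ⊢
  linear_combination (2 * n + 1)! * c ^ n * (2 * n + 3) * (2 * n + 2) * c *
    (c * h + 3 * (3 * n + 4) * (3 * n + 5) * fussCatalanTerm c⁻¹ (n + 1) * hc')

end EulerCF

/-- Euler's continued fraction for the hypergeometric series `S(c)`:
the CF with `a(0)=1`, `a(1)=6c`, `a(n)=(4c+27)n²+(2c-27)n+6` for `n ≥ 2`,
`b(0)=6`, `b(n)=-6cn(2n+1)(3n+1)(3n+2)` for `n ≥ 1` converges to `S(c)`. -/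
theorem euler_CF_for_hypergeometric (c : ℚ) (hc : |c| > 27 / 4) :
    let a : ℕ → ℚ := fun n =>
      if n = 0 then 1 else if n = 1 then 6 * c
      else (4 * c + 27) * (n : ℚ) ^ 2 + (2 * c - 27) * (n : ℚ) + 6
    let b : ℕ → ℚ := fun n =>
      if n = 0 then 6
      else -6 * c * (n : ℚ) * (2 * (n : ℚ) + 1) * (3 * (n : ℚ) + 1) *
        (3 * (n : ℚ) + 2)
    CFConvergesTo a b
      (∑' n : ℕ, (1 / (2 * (n : ℝ) + 1)) * (Nat.choose (3 * n) n : ℝ) *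
        ((c : ℝ))⁻¹ ^ n) ∧
    CFType (∑' n : ℕ, (1 / (2 * (n : ℝ) + 1)) * (Nat.choose (3 * n) n : ℝ) *
        ((c : ℝ))⁻¹ ^ n) := by
  have hc₀ : c ≠ 0 := by
    rintro rfl
    norm_num at hc
  have hsum : HasSum (fun k => ((fussCatalanTerm c⁻¹ k : ℚ) : ℝ))
      (∑' n, fussCatalanTerm (c : ℝ)⁻¹ n) := by
    simp only [Rat.cast_fussCatalanTerm, Rat.cast_inv]
    refine (summable_fussCatalanTerm ?_).hasSum
    have hcR : (27 / 4 : ℝ) < |(c : ℝ)| := by simpa using (Rat.cast_lt (K := ℝ)).2 hc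
    rw [norm_inv, Real.norm_eq_abs]
    exact inv_lt_of_inv_lt₀ (by norm_num) (by rwa [inv_div])
  have hP := cfP_eq_cfQ_mul_sum (by simp [EulerCF.a, fussCatalanTerm])
    (by simp [EulerCF.a, EulerCF.b, fussCatalanTerm]; field_simp; norm_num)
    (EulerCF.step_eq_zero hc₀)
  have hCF : CFConvergesTo (EulerCF.a c) (EulerCF.b c) (∑' n, fussCatalanTerm (c : ℝ)⁻¹ n) :=
    cfConvergesTo_of_cfP_eq_cfQ_mul_sum (EulerCF.b_ne_zero hc₀)
      (fun n => by rw [EulerCF.cfQ_eq]; positivity) hP hsum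
  exact ⟨hCF, _, _, EulerCF.cfPolyType c, hCF⟩
end

section
/- Let u and a be rational numbers with u > 0. Then the real number u^a belongs to 𝒞, i.e., there is a generalized continued fraction of polynomial type converging to u^a. -/
/-!
Euler's transformation writes the partial sums of any series `∑ tₖ` as the convergents of a
continued fraction whose denominators `Dₙ` may be prescribed. For the binomial series
`(1 + z)^α = ∑ (α choose k) zᵏ` (`0 < |z| < 1`, `α ∉ ℕ`) the choice `Dₙ = n! (n-1)!` makes the
partial quotients and numerators polynomial in `n`. Now `u^a = (1 + (u - 1))^a` for `u < 1` and
`u^a = (1 + (u⁻¹ - 1))^(-a)` for `u > 1`; when `u^a = r` is rational, the geometric series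
`r = ∑ r/2^(k+1)` does the job.
-/

open Finset Polynomial

/-- Euler's transformation: these recurrences force `cfQ a b = D` and
`cfP a b n = D n * ∑ k < n, t k`. -/
structure IsEulerCF (a b D t : ℕ → ℚ) : Prop where
  denom_zero : D 0 = 1
  a_zero : a 0 = 0
  a_one : a 1 = D 1
  b_zero : b 0 = D 1 * t 0
  denom_succ_succ : ∀ n, a (n + 2) * D (n + 1) + b (n + 1) * D n = D (n + 2)
  term_succ : ∀ n, b (n + 1) * D n * t n + D (n + 2) * t (n + 1) = 0

namespace IsEulerCF

variable {a b D t : ℕ → ℚ}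

theorem cfQ_eq (h : IsEulerCF a b D t) (n : ℕ) : cfQ a b n = D n := by
  induction n using Nat.twoStepInduction with
  | zero => simp [cfQ, h.denom_zero]
  | one => simp [cfQ, h.a_one]
  | more n ih₁ ih₂ => rw [cfQ, ih₁, ih₂, h.denom_succ_succ]

theorem cfP_eq (h : IsEulerCF a b D t) (n : ℕ) : cfP a b n = D n * ∑ k ∈ range n, t k := by
  induction n using Nat.twoStepInduction with
  | zero => simp [cfP, h.a_zero]
  | one => simp [cfP, h.a_zero, h.b_zero]
  | more n ih₁ ih₂ =>
    rw [cfP, ih₁, ih₂, sum_range_succ _ (n + 1), sum_range_succ]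
    linear_combination (∑ k ∈ range n, t k + t n) * h.denom_succ_succ n - h.term_succ n

theorem cfConvergesTo (h : IsEulerCF a b D t) (hb : ∀ n, b n ≠ 0) (hD : ∀ n, D n ≠ 0)
    {s : ℝ} (hs : HasSum (fun k ↦ (t k : ℝ)) s) : CFConvergesTo a b s := by
  refine ⟨hb, ⟨0, fun n _ ↦ h.cfQ_eq n ▸ hD n⟩, ?_⟩
  have hconv (n : ℕ) : (cfP a b n : ℝ) / cfQ a b n = ∑ k ∈ range n, (t k : ℝ) := by
    rw [h.cfP_eq, h.cfQ_eq, Rat.cast_mul, mul_div_cancel_left₀ _ (Rat.cast_ne_zero.2 (hD n)),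
      Rat.cast_sum]
  simpa only [hconv] using hs.tendsto_sum_nat

end IsEulerCF

theorem cfPolyType_of_add_two {a b : ℕ → ℚ} (A B : ℚ[X])
    (h : ∀ k : ℕ, a (k + 2) = A.eval ((k : ℚ) + 2) ∧ b (k + 2) = B.eval ((k : ℚ) + 2)) :
    CFPolyType a b := by
  refine ⟨A, B, 2, fun n hn ↦ ?_⟩
  obtain ⟨k, rfl⟩ := Nat.exists_eq_add_of_le' hn
  exact_mod_cast h k

def geomA : ℕ → ℚ
  | 0 => 0
  | 1 => 1
  | _ + 2 => 3 / 2

def geomB (r : ℚ) : ℕ → ℚ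
  | 0 => r / 2
  | _ + 1 => -1 / 2

theorem isEulerCF_geom (r : ℚ) :
    IsEulerCF geomA (geomB r) (fun _ ↦ 1) (fun k ↦ r / 2 / 2 ^ k) where
  denom_zero := rfl
  a_zero := rfl
  a_one := rfl
  b_zero := by simp [geomB]
  denom_succ_succ _ := by norm_num [geomA, geomB]
  term_succ _ := by simp only [geomB, pow_succ]; field_simp; ring

theorem cfType_ratCast {r : ℚ} (hr : r ≠ 0) : CFType r := by
  refine ⟨geomA, geomB r, cfPolyType_of_add_two (C (3 / 2)) (C (-1 / 2)) fun _ ↦ ?_,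
    (isEulerCF_geom r).cfConvergesTo ?_ (fun _ ↦ one_ne_zero) ?_⟩
  · simp [geomA, geomB]
  · rintro (_ | _) <;> simp [geomB, hr]
  · simpa using hasSum_geometric_two' (r : ℝ)

theorem Ring.choose_succ_mul_succ {R : Type*} [Field R] [CharZero R] (a : R) (k : ℕ) :
    Ring.choose a (k + 1) * (k + 1) = Ring.choose a k * (a - k) := by
  simp only [Ring.choose_eq_smul, descPochhammer_succ_right, smeval_mul, smeval_sub, smeval_X,
    smeval_natCast, Nat.factorial_succ, smul_eq_mul]
  push_cast
  field_simp
  simp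

theorem Real.hasSum_choose_mul_pow (α : ℝ) {x : ℝ} (hx : |x| < 1) :
    HasSum (fun k ↦ Ring.choose α k * x ^ k) ((1 + x) ^ α) := by
  have hx' : x ∈ Metric.eball (0 : ℝ) 1 := by simpa [← ofReal_norm] using hx
  simpa only [binomialSeries_apply, List.ofFn_const, List.prod_replicate, smul_eq_mul, zero_add]
    using (Real.one_add_rpow_hasFPowerSeriesOnBall_zero (a := α)).hasSum hx'

-- `binomDenom n = n! (n-1)!` for `n ≥ 1`; this growth makes the coefficients polynomial.
def binomDenom : ℕ → ℚ
  | 0 => 1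
  | 1 => 1
  | n + 2 => ((n : ℚ) + 2) * ((n : ℚ) + 1) * binomDenom (n + 1)

theorem binomDenom_pos (n : ℕ) : 0 < binomDenom n := by
  induction n using Nat.twoStepInduction with
  | zero => norm_num [binomDenom]
  | one => norm_num [binomDenom]
  | more n ih _ => rw [binomDenom]; positivity

def binomA (α z : ℚ) : ℕ → ℚ
  | 0 => 0
  | 1 => 1
  | n + 2 => ((n : ℚ) + 2) * ((n : ℚ) + 1) + ((n : ℚ) + 2) * (α - n) * z

def binomB (α z : ℚ) : ℕ → ℚ
  | 0 => 1
  | 1 => -2 * α * z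
  | n + 2 => -(((n : ℚ) + 3) * ((n : ℚ) + 2) * ((n : ℚ) + 1) * (α - ((n : ℚ) + 1)) * z)

theorem isEulerCF_binom (α z : ℚ) :
    IsEulerCF (binomA α z) (binomB α z) binomDenom (fun k ↦ Ring.choose α k * z ^ k) where
  denom_zero := rfl
  a_zero := rfl
  a_one := rfl
  b_zero := by simp [binomB, binomDenom]
  denom_succ_succ
    | 0 => by norm_num [binomA, binomB, binomDenom]
    | n + 1 => by simp only [binomA, binomB, binomDenom]; push_cast; ring
  term_succ n := by
    have hk := Ring.choose_succ_mul_succ α n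
    rcases n with _ | n
    · simp only [binomB, binomDenom]
      push_cast at hk ⊢
      linear_combination 2 * z * hk
    · simp only [binomB, binomDenom]
      push_cast at hk ⊢
      linear_combination ((n : ℚ) + 3) * (n + 2) * (n + 1) * binomDenom (n + 1) * z ^ (n + 2) * hk

theorem binomB_ne_zero {α z : ℚ} (hα : ∀ k : ℕ, α ≠ k) (hz : z ≠ 0) (n : ℕ) :
    binomB α z n ≠ 0 := by
  match n with
  | 0 => exact one_ne_zero
  | 1 => simpa [binomB, hz] using hα 0
  | n + 2 =>
    have hαn : α - ((n : ℚ) + 1) ≠ 0 := sub_ne_zero.2 (by exact_mod_cast hα (n + 1))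
    simp only [binomB, neg_ne_zero]
    positivity

theorem cfType_one_add_rpow {α z : ℚ} (hα : ∀ k : ℕ, α ≠ k) (hz : z ≠ 0) (hz₁ : |z| < 1) :
    CFType ((1 + z : ℝ) ^ (α : ℝ)) := by
  refine ⟨binomA α z, binomB α z,
    cfPolyType_of_add_two (C (1 - z) * X ^ 2 + C ((α + 2) * z - 1) * X)
      (C (-z) * (X + 1) * X * (X - 1) * (C (α + 1) - X)) fun k ↦ ?_,
    (isEulerCF_binom α z).cfConvergesTo (binomB_ne_zero hα hz) (fun n ↦ (binomDenom_pos n).ne')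
      ?_⟩
  · constructor <;> simp [binomA, binomB] <;> ring
  · have hcast (k : ℕ) : ((Ring.choose α k : ℚ) : ℝ) = Ring.choose (α : ℝ) k :=
      Ring.map_choose (Rat.castHom ℝ) α k
    simpa [hcast] using Real.hasSum_choose_mul_pow α (x := z) (by exact_mod_cast hz₁)

theorem cfType_rpow_of_lt_one {u α : ℚ} (hu₀ : 0 < u) (hu₁ : u < 1) (hα : ∀ k : ℕ, α ≠ k) :
    CFType ((u : ℝ) ^ (α : ℝ)) := by
  have h := cfType_one_add_rpow hα (z := u - 1) (by linarith)
    (abs_lt.2 ⟨by linarith, by linarith⟩)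
  rwa [Rat.cast_sub, Rat.cast_one, add_sub_cancel] at h

/-- For rational `u > 0` and rational `a`, the real power `u^a` is of
continued fraction type. -/
theorem rat_rpow_CFType (u a : ℚ) (hu : 0 < u) :
    CFType ((u : ℝ) ^ (a : ℝ)) := by
  by_cases ha_int : ∃ m : ℤ, a = m
  · obtain ⟨m, rfl⟩ := ha_int
    simpa [Real.rpow_intCast] using cfType_ratCast (zpow_ne_zero m hu.ne')
  push Not at ha_int
  rcases lt_trichotomy u 1 with hlt | rfl | hgt
  · exact cfType_rpow_of_lt_one hu hlt fun k ↦ by exact_mod_cast ha_int k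
  · simpa using cfType_ratCast one_ne_zero
  · have h := cfType_rpow_of_lt_one (inv_pos.2 hu) (inv_lt_one_of_one_lt₀ hgt) (α := -a)
      fun k hk ↦ ha_int (-k) (by push_cast; linarith)
    rwa [Rat.cast_inv, Rat.cast_neg, Real.inv_rpow (by positivity), Real.rpow_neg (by positivity),
      inv_inv] at h
end

section
/- Let u be a real number that is algebraic of degree 3 over ℚ such that r(u) is defined, and let A, B ∈ ℚ with A ≠ 0. Then Au + B is algebraic of degree 3 over ℚ, r(Au + B) is defined, and r(Au + B) = r(u). -/
/-- The "denominator" `27a²d - 9abc + 2b³` appearing in the ratio of a cubic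
polynomial `ax³ + bx² + cx + d`. -/
def cubicRatioDen (P : Polynomial ℚ) : ℚ :=
  27 * (P.coeff 3) ^ 2 * (P.coeff 0) -
    9 * (P.coeff 3) * (P.coeff 2) * (P.coeff 1) + 2 * (P.coeff 2) ^ 3

/-- The ratio `r(P) = 4(3ac - b²)³/(27a²d - 9abc + 2b³)²` of a cubic
polynomial `P(x) = ax³ + bx² + cx + d`. -/
def cubicRatio (P : Polynomial ℚ) : ℚ :=
  4 * (3 * (P.coeff 3) * (P.coeff 1) - (P.coeff 2) ^ 2) ^ 3 /
    (cubicRatioDen P) ^ 2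

open Polynomial in
/-- The ratio of a cubic irrationality is invariant under the affine maps
`u ↦ Au + B` with `A, B ∈ ℚ`, `A ≠ 0`. -/
theorem cubicRatio_affine_invariant (u : ℝ) (hu : (minpoly ℚ u).natDegree = 3)
    (hden : cubicRatioDen (minpoly ℚ u) ≠ 0) (A B : ℚ) (hA : A ≠ 0) :
    (minpoly ℚ ((A : ℝ) * u + (B : ℝ))).natDegree = 3 ∧
    cubicRatioDen (minpoly ℚ ((A : ℝ) * u + (B : ℝ))) ≠ 0 ∧
    cubicRatio (minpoly ℚ ((A : ℝ) * u + (B : ℝ))) = cubicRatio (minpoly ℚ u) := by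
  set v : ℝ := (A : ℝ) * u + (B : ℝ) with hv
  have hu_int : IsIntegral ℚ u := by
    by_contra h
    rw [minpoly.eq_zero h] at hu
    simp at hu
  set P := minpoly ℚ u with hPdef
  have hPm : P.Monic := minpoly.monic hu_int
  have hP3 : P.coeff 3 = 1 := by
    have := hPm.coeff_natDegree
    rwa [hu] at this
  set b := P.coeff 2 with hb
  set c := P.coeff 1 with hc
  set d := P.coeff 0 with hd
  have heval : u ^ 3 + (b : ℝ) * u ^ 2 + (c : ℝ) * u + (d : ℝ) = 0 := by
    have h0 := minpoly.aeval ℚ u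
    rw [Polynomial.aeval_eq_sum_range, ← hPdef, hu] at h0
    simp only [Finset.sum_range_succ, Finset.sum_range_zero, zero_add,
      Rat.smul_def, Rat.cast_zero] at h0
    rw [hP3] at h0
    push_cast at h0
    linear_combination h0
  -- the candidate minimal polynomial of `v`
  set Q : Cubic ℚ := ⟨1, A * b - 3 * B, 3 * B ^ 2 - 2 * A * b * B + A ^ 2 * c,
    -B ^ 3 + A * b * B ^ 2 - A ^ 2 * c * B + A ^ 3 * d⟩ with hQdef
  have hQm : Q.toPoly.Monic := Cubic.monic_of_a_eq_one rfl
  have hQv : (Polynomial.aeval v) Q.toPoly = 0 := by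
    simp only [Cubic.toPoly, hQdef, map_add, map_mul, map_pow,
      Polynomial.aeval_C, Polynomial.aeval_X, eq_ratCast]
    push_cast
    linear_combination (A : ℝ) ^ 3 * heval
  have hv_int : IsIntegral ℚ v := ⟨Q.toPoly, hQm, hQv⟩
  have hdvd : minpoly ℚ v ∣ Q.toPoly := minpoly.dvd ℚ v hQv
  have hQne : Q.toPoly ≠ 0 := hQm.ne_zero
  have hQdeg : Q.toPoly.natDegree = 3 := Cubic.natDegree_of_a_ne_zero one_ne_zero
  have hle : (minpoly ℚ v).natDegree ≤ 3 := by
    have := Polynomial.natDegree_le_of_dvd hdvd hQne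
    rwa [hQdeg] at this
  have hge : 3 ≤ (minpoly ℚ v).natDegree := by
    set R := minpoly ℚ v with hRdef
    set L : Polynomial ℚ := Polynomial.C A * Polynomial.X + Polynomial.C B with hL
    have hLdeg : L.natDegree = 1 := by
      rw [hL]
      compute_degree!
    have hLu : (Polynomial.aeval u) L = v := by simp [hL, hv]
    have hRu : (Polynomial.aeval u) (R.comp L) = 0 := by
      rw [Polynomial.aeval_comp, hLu, hRdef]
      exact minpoly.aeval ℚ v
    have hRm : R.Monic := minpoly.monic hv_int
    have hcomp_ne : R.comp L ≠ 0 := by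
      intro h
      have hlc : (R.comp L).leadingCoeff = R.leadingCoeff * L.leadingCoeff ^ R.natDegree :=
        Polynomial.leadingCoeff_comp (by rw [hLdeg]; exact one_ne_zero)
      rw [h, Polynomial.leadingCoeff_zero, hRm.leadingCoeff, one_mul] at hlc
      have hLlc : L.leadingCoeff ≠ 0 := by
        rw [Polynomial.leadingCoeff_ne_zero]
        intro h0
        rw [h0] at hLdeg
        simp at hLdeg
      exact (pow_ne_zero _ hLlc) hlc.symm
    have hdvd' : P ∣ R.comp L := minpoly.dvd ℚ u hRu
    have := Polynomial.natDegree_le_of_dvd hdvd' hcomp_ne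
    rw [hu, Polynomial.natDegree_comp, hLdeg, mul_one] at this
    exact this
  have hdeg : (minpoly ℚ v).natDegree = 3 := le_antisymm hle hge
  have heq : minpoly ℚ v = Q.toPoly :=
    Polynomial.eq_of_monic_of_associated (minpoly.monic hv_int) hQm
      (Polynomial.associated_of_dvd_of_natDegree_le hdvd hQne (by rw [hdeg, hQdeg]))
  have hdenP : cubicRatioDen P = 27 * d - 9 * b * c + 2 * b ^ 3 := by
    rw [cubicRatioDen, ← hb, ← hc, ← hd, hP3]; ring
  have hQ3 : Q.toPoly.coeff 3 = 1 := by rw [Cubic.coeff_eq_a]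
  have hQ2 : Q.toPoly.coeff 2 = A * b - 3 * B := by rw [Cubic.coeff_eq_b]
  have hQ1 : Q.toPoly.coeff 1 = 3 * B ^ 2 - 2 * A * b * B + A ^ 2 * c := by
    rw [Cubic.coeff_eq_c]
  have hQ0 : Q.toPoly.coeff 0 = -B ^ 3 + A * b * B ^ 2 - A ^ 2 * c * B + A ^ 3 * d := by
    rw [Cubic.coeff_eq_d]
  have hdenQ : cubicRatioDen Q.toPoly = A ^ 3 * cubicRatioDen P := by
    rw [cubicRatioDen, cubicRatioDen, hQ3, hQ2, hQ1, hQ0, ← hb, ← hc, ← hd, hP3]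
    ring
  have hdenQ_ne : cubicRatioDen Q.toPoly ≠ 0 :=
    hdenQ ▸ mul_ne_zero (pow_ne_zero _ hA) hden
  refine ⟨heq ▸ hdeg, heq ▸ hdenQ_ne, ?_⟩
  rw [heq, cubicRatio, cubicRatio, hdenQ, hQ3, hQ2, hQ1, ← hb, ← hc, hP3]
  rw [div_eq_div_iff (pow_ne_zero 2 (mul_ne_zero (pow_ne_zero 3 hA) hden))
    (pow_ne_zero 2 hden)]
  ring
end

section
/- The generalized continued fraction with coefficients a(0) = 1, a(1) = 6, a(n) = 9n - 2 for n ≥ 2, b(0) = 1, and b(n) = -6n(3n + 1) for n ≥ 1 converges to the real cube root of 2; that is, its convergents pₙ/qₙ satisfy qₙ ≠ 0 for all sufficiently large n and pₙ/qₙ → 2^{1/3}. In particular 2^{1/3} ∈ 𝒞. -/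
/-!
The denominators of this continued fraction are `qₙ = 6ⁿ n!`, and `pₙ / qₙ` is the `n`-th
partial sum of the binomial series `∑ (1/3)ₖ / k! · xᵏ = (1 - x)^(-1/3)` at `x = 1/2`, whose sum
is `2^(1/3)`.
Both facts are checked against the three-term recurrence, using that consecutive terms of the series
satisfy `6 (k + 1) tₖ₊₁ = (3k + 1) tₖ`.
-/

open Filter Finset Topology
open scoped Nat

theorem cfP_eq_of_recurrence {a b p : ℕ → ℚ} (h0 : p 0 = a 0) (h1 : p 1 = a 1 * a 0 + b 0)
    (hrec : ∀ n, p (n + 2) = a (n + 2) * p (n + 1) + b (n + 1) * p n) : cfP a b = p := by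
  funext n
  induction n using Nat.twoStepInduction with
  | zero => exact h0.symm
  | one => exact h1.symm
  | more n ih ih' => rw [cfP, ih, ih', hrec]

theorem cfQ_eq_of_recurrence {a b q : ℕ → ℚ} (h0 : q 0 = 1) (h1 : q 1 = a 1)
    (hrec : ∀ n, q (n + 2) = a (n + 2) * q (n + 1) + b (n + 1) * q n) : cfQ a b = q := by
  funext n
  induction n using Nat.twoStepInduction with
  | zero => exact h0.symm
  | one => exact h1.symm
  | more n ih ih' => rw [cfQ, ih, ih', hrec]

theorem Ring.succ_mul_multichoose_succ {R : Type*} [Field R] [CharZero R] (a : R) (k : ℕ) :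
    (k + 1) * Ring.multichoose a (k + 1) = (a + k) * Ring.multichoose a k := by
  have h := Ring.factorial_nsmul_multichoose_eq_ascPochhammer a
  have hk := h (k + 1)
  rw [Polynomial.ascPochhammer_smeval_eq_eval, ascPochhammer_succ_eval,
    ← Polynomial.ascPochhammer_smeval_eq_eval, ← h k,
    Nat.factorial_succ, mul_nsmul', nsmul_eq_mul, nsmul_eq_mul, nsmul_eq_mul] at hk
  apply mul_left_cancel₀ (Nat.cast_ne_zero.mpr k.factorial_ne_zero : (k.factorial : R) ≠ 0)
  push_cast at hk
  linear_combination hk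

theorem Real.hasSum_multichoose_mul_pow (a : ℝ) {x : ℝ} (hx : |x| < 1) :
    HasSum (fun n ↦ Ring.multichoose a n * x ^ n) (1 / (1 - x) ^ a) := by
  have h := (one_div_one_sub_rpow_hasFPowerSeriesOnBall_zero a).hasSum (y := x)
    (by simpa [← ofReal_norm] using hx)
  simpa only [FormalMultilinearSeries.ofScalars_apply_eq', zero_add, smul_eq_mul,
    Ring.multichoose_eq] using h

def cbrtTwoA : ℕ → ℚ := fun n => if n = 0 then 1 else if n = 1 then 6 else 9 * (n : ℚ) - 2

def cbrtTwoB : ℕ → ℚ := fun n => if n = 0 then 1 else -6 * (n : ℚ) * (3 * (n : ℚ) + 1)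

noncomputable def cbrtTwoTerm (k : ℕ) : ℚ := Ring.multichoose (1 / 3 : ℚ) k / 2 ^ k

noncomputable def cbrtTwoPartialSum (n : ℕ) : ℚ := ∑ k ∈ range (n + 1), cbrtTwoTerm k

lemma cbrtTwoA_add_two (n : ℕ) : cbrtTwoA (n + 2) = 9 * n + 16 := by
  simp only [cbrtTwoA]; push_cast; ring

lemma cbrtTwoB_succ (n : ℕ) : cbrtTwoB (n + 1) = -6 * (n + 1) * (3 * n + 4) := by
  simp only [cbrtTwoB, if_neg n.succ_ne_zero]; push_cast; ring

lemma cbrtTwoTerm_succ (k : ℕ) :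
    6 * (k + 1) * cbrtTwoTerm (k + 1) = (3 * k + 1) * cbrtTwoTerm k := by
  have h := Ring.succ_mul_multichoose_succ (1 / 3 : ℚ) k
  simp only [cbrtTwoTerm, pow_succ]
  field_simp
  linear_combination 6 * h

lemma cfQ_cbrtTwo : cfQ cbrtTwoA cbrtTwoB = fun n => (6 : ℚ) ^ n * n ! := by
  refine cfQ_eq_of_recurrence (by simp) (by simp [cbrtTwoA]) fun n => ?_
  simp only [cbrtTwoA_add_two, cbrtTwoB_succ, Nat.factorial_succ]
  push_cast
  ring

lemma cfP_cbrtTwo :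
    cfP cbrtTwoA cbrtTwoB = fun n => (6 : ℚ) ^ n * n ! * cbrtTwoPartialSum n := by
  refine cfP_eq_of_recurrence (by simp [cbrtTwoA, cbrtTwoPartialSum, cbrtTwoTerm])
    (by norm_num [cbrtTwoA, cbrtTwoB, cbrtTwoPartialSum, cbrtTwoTerm, sum_range_succ]) fun n => ?_
  simp only [cbrtTwoA_add_two, cbrtTwoB_succ, Nat.factorial_succ, cbrtTwoPartialSum,
    sum_range_succ (n := n + 2), sum_range_succ (n := n + 1)]
  have h := cbrtTwoTerm_succ (n + 1)
  push_cast at h ⊢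
  linear_combination 6 ^ (n + 1) * (n + 1) * (n ! : ℚ) * h

lemma tendsto_cbrtTwoPartialSum :
    Tendsto (fun n => (cbrtTwoPartialSum n : ℝ)) atTop (𝓝 (2 ^ (1 / 3 : ℝ))) := by
  have h := Real.hasSum_multichoose_mul_pow (1 / 3) (x := 1 / 2) (by norm_num [abs_of_pos])
  have hsum : (1 : ℝ) / (1 - 1 / 2) ^ (1 / 3 : ℝ) = 2 ^ (1 / 3 : ℝ) := by
    rw [show (1 : ℝ) - 1 / 2 = 2⁻¹ by norm_num, Real.inv_rpow zero_le_two, one_div, inv_inv]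
  rw [hsum] at h
  refine (h.tendsto_sum_nat.comp (tendsto_add_atTop_nat 1)).congr fun n => ?_
  simp only [Function.comp_apply, cbrtTwoPartialSum, cbrtTwoTerm, Rat.cast_sum, Rat.cast_div,
    Rat.cast_pow, Rat.cast_ofNat]
  refine sum_congr rfl fun k _ => ?_
  have h : (↑(Ring.multichoose (1 / 3 : ℚ) k) : ℝ) = Ring.multichoose (1 / 3 : ℝ) k := by
    rw [← Rat.coe_castHom, Ring.map_multichoose]
    norm_num
  rw [← h, div_pow, one_pow, mul_one_div]

lemma cbrtTwoB_ne_zero : ∀ n, cbrtTwoB n ≠ 0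
  | 0 => by simp [cbrtTwoB]
  | n + 1 => by
    rw [cbrtTwoB_succ]
    have : (0 : ℚ) < (n + 1) * (3 * n + 4) := by positivity
    linarith

lemma cfP_div_cfQ_cbrtTwo (n : ℕ) :
    cfP cbrtTwoA cbrtTwoB n / cfQ cbrtTwoA cbrtTwoB n = cbrtTwoPartialSum n := by
  rw [cfP_cbrtTwo, cfQ_cbrtTwo, mul_div_cancel_left₀ _ (by positivity)]

lemma cbrtTwo_convergesTo : CFConvergesTo cbrtTwoA cbrtTwoB (2 ^ (1 / 3 : ℝ)) := by
  refine ⟨cbrtTwoB_ne_zero, ⟨0, fun n _ => by rw [cfQ_cbrtTwo]; positivity⟩, ?_⟩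
  refine tendsto_cbrtTwoPartialSum.congr fun n => ?_
  rw [← cfP_div_cfQ_cbrtTwo, Rat.cast_div]

open Polynomial in
lemma cbrtTwo_polyType : CFPolyType cbrtTwoA cbrtTwoB := by
  refine ⟨C 9 * X - C 2, -C 18 * X ^ 2 - C 6 * X, 2, fun n hn => ?_⟩
  obtain ⟨m, rfl⟩ : ∃ m, n = m + 2 := ⟨n - 2, by omega⟩
  rw [cbrtTwoA_add_two, cbrtTwoB_succ]
  constructor <;>
    simp only [Nat.cast_add, Nat.cast_one, Nat.cast_ofNat, neg_mul, eval_sub, eval_neg, eval_mul,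
      eval_C, eval_pow, eval_X] <;>
    ring

/-- The continued fraction `((1, 6, 9n-2), (1, -6n(3n+1)))` converges to the
real cube root of 2; in particular `2^(1/3) ∈ 𝒞`. -/
theorem cbrt_two_CF :
    let a : ℕ → ℚ := fun n =>
      if n = 0 then 1 else if n = 1 then 6 else 9 * (n : ℚ) - 2
    let b : ℕ → ℚ := fun n =>
      if n = 0 then 1 else -6 * (n : ℚ) * (3 * (n : ℚ) + 1)
    CFConvergesTo a b ((2 : ℝ) ^ ((1 : ℝ) / 3)) ∧
    CFType ((2 : ℝ) ^ ((1 : ℝ) / 3)) :=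
  ⟨cbrtTwo_convergesTo, cbrtTwoA, cbrtTwoB, cbrtTwo_polyType, cbrtTwo_convergesTo⟩
end

section
/- Let u be a real number satisfying u³ + a₂u² + a₁u + a₀ = 0 with a₀, a₁, a₂ ∈ ℚ, and suppose D := 27a₀ + 2a₂³ - 9a₁a₂ ≠ 0 and 9a₂² - 27a₁ ≠ 0. Set v = ((9a₂² - 27a₁)/D)·(u + a₂/3). Then v satisfies v³ - cv + c = 0 with c = (9a₂² - 27a₁)³/(27·D²). -/
/-- Reduction of a cubic `x³ + a₂x² + a₁x + a₀` to the normal form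
`x³ - cx + c`: the element `v = ((9a₂² - 27a₁)/D)·(u + a₂/3)` satisfies
`v³ - cv + c = 0` with `c = (9a₂² - 27a₁)³/(27·D²)`,
where `D = 27a₀ + 2a₂³ - 9a₁a₂`. -/
theorem cubic_to_normal_form (u : ℝ) (a₀ a₁ a₂ : ℚ)
    (hroot : u ^ 3 + (a₂ : ℝ) * u ^ 2 + (a₁ : ℝ) * u + (a₀ : ℝ) = 0)
    (hD : 27 * a₀ + 2 * a₂ ^ 3 - 9 * a₁ * a₂ ≠ 0)
    (he : 9 * a₂ ^ 2 - 27 * a₁ ≠ 0) :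
    let D : ℚ := 27 * a₀ + 2 * a₂ ^ 3 - 9 * a₁ * a₂
    let v : ℝ := (((9 * a₂ ^ 2 - 27 * a₁) / D : ℚ) : ℝ) * (u + (a₂ : ℝ) / 3)
    let c : ℚ := (9 * a₂ ^ 2 - 27 * a₁) ^ 3 / (27 * D ^ 2)
    v ^ 3 - (c : ℝ) * v + (c : ℝ) = 0 := by
  intro D v c
  have hD' : (27 * (a₀:ℝ) + 2 * (a₂:ℝ) ^ 3 - 9 * (a₁:ℝ) * (a₂:ℝ)) ≠ 0 := by
    exact_mod_cast hD
  simp only [v, c, D]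
  push_cast
  have key : ((9 * (a₂:ℝ) ^ 2 - 27 * a₁) / (27 * a₀ + 2 * a₂ ^ 3 - 9 * a₁ * a₂) *
        (u + a₂ / 3)) ^ 3 -
      (9 * (a₂:ℝ) ^ 2 - 27 * a₁) ^ 3 / (27 * (27 * a₀ + 2 * a₂ ^ 3 - 9 * a₁ * a₂) ^ 2) *
        ((9 * a₂ ^ 2 - 27 * a₁) / (27 * a₀ + 2 * a₂ ^ 3 - 9 * a₁ * a₂) * (u + a₂ / 3)) +
      (9 * (a₂:ℝ) ^ 2 - 27 * a₁) ^ 3 / (27 * (27 * a₀ + 2 * a₂ ^ 3 - 9 * a₁ * a₂) ^ 2) =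
      ((9 * (a₂:ℝ) ^ 2 - 27 * a₁) / (27 * a₀ + 2 * a₂ ^ 3 - 9 * a₁ * a₂)) ^ 3 *
        (u ^ 3 + a₂ * u ^ 2 + a₁ * u + a₀) := by
    field_simp
    ring
  rw [key, hroot, mul_zero]
end
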